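/- Let (E,ℒ,𝒜) be a weakly left-resolving, normal labelled space. Let (t,φ) ∈ Ω with t = (β,A,γ), and let ξ^α be the tight filter associated with φ, so that α = γα' for some α' ∈ ℒ^{≤∞}. Then H_{[γ]α'}(ξ^α) lies in the domain T^{(β)α'} of G_{(β)α'}, so η = (G_{(β)α'} ∘ H_{[γ]α'})(ξ^α) is well defined; moreover η is the tight filter associated with the character θ_t(φ), i.e., for every e ∈ E(S), θ_t(φ)(e) = 1 if and only if e ∈ η. -/

import Mathlib

open Classical

universe u v w

/-! ## Words over an alphabet -/

/-- Finite-or-infinite words over the alphabet `A`: `Sum.inl l` is the finite word `l`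
(with `[]` playing the role of the empty word `ω`), and `Sum.inr f` is the infinite word `f`. -/
abbrev Word (A : Type w) := List A ⊕ (ℕ → A)

/-- The length `|α| ∈ ℕ∞` of a word. -/
def wlength {A : Type w} : Word A → ℕ∞ :=
  Sum.elim (fun l => (l.length : ℕ∞)) fun _ => ⊤

/-- The finite prefix `α_{1,n}` of a word `α`. -/
def wprefix {A : Type w} : Word A → ℕ → List A :=
  Sum.elim (fun l n => l.take n) fun f n => List.ofFn fun i : Fin n => f i

/-- Concatenation `αβ` of a finite word `α` with a word `β`. -/
def wappend {A : Type w} (α : List A) : Word A → Word A :=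
  Sum.elim (fun l => Sum.inl (α ++ l)) fun f =>
    Sum.inr fun n => if h : n < α.length then α.get ⟨n, h⟩ else f (n - α.length)

/-- `β` is a beginning (finite prefix) of the word `α`. -/
def WPrefix {A : Type w} (β : List A) : Word A → Prop :=
  Sum.elim (fun l => β <+: l) fun f => β = List.ofFn fun i : Fin β.length => f i

/-! ## Triples -/

/-- Formal triples `(α, X, β)` together with a zero element; the inverse semigroup `S`
of a labelled space consists of such elements. -/
inductive Tr (V : Type u) (A : Type w) where
  | zero : Tr V A
  | mk : List A → Set V → List A → Tr V A

/-- The involution `(α,A,β)* = (β,A,α)` (fixing `0`). -/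
def Tr.tstar {V : Type u} {A : Type w} : Tr V A → Tr V A
  | .zero => .zero
  | .mk α X β => .mk β X α

/-! ## Labelled spaces -/

/-- The data of a labelled space `(E, ℒ, 𝒜)`: a directed graph on nonempty vertex/edge
sets, a surjective labelling map onto the alphabet `A`, and a family `𝒜` of subsets
of the vertex set. -/
structure LblSp (V : Type u) (E : Type v) (A : Type w) where
  src : E → V
  rng : E → V
  lab : E → A
  lab_surj : Function.Surjective lab
  nonempty_V : Nonempty V
  nonempty_E : Nonempty E
  𝒜 : Set (Set V)

namespace LblSp

variable {V : Type u} {Ed : Type v} {A : Type w} (Λ : LblSp V Ed A)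

/-- `α ≠ ω` is the label of some finite path of the graph. -/
def IsPathLabel (α : List A) : Prop :=
  ∃ l : List Ed, l ≠ [] ∧ List.Chain' (fun e f => Λ.rng e = Λ.src f) l ∧ l.map Λ.lab = α

/-- `ℒ^*`: the finite labelled paths, together with the empty word. -/
def LStar : Set (List A) := {α | α = [] ∨ Λ.IsPathLabel α}

/-- `ℒ^∞`: the infinite labelled paths. -/
def LInfty : Set (ℕ → A) :=
  {f | ∃ e : ℕ → Ed, (∀ n, Λ.rng (e n) = Λ.src (e (n + 1))) ∧ ∀ n, Λ.lab (e n) = f n}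

/-- `ℒ^{≤∞} = ℒ^* ∪ ℒ^∞`, as a predicate on `Word A`. -/
def IsWordW : Word A → Prop := Sum.elim (· ∈ Λ.LStar) (· ∈ Λ.LInfty)

/-- The relative range `r(X, α)` (with `r(X, ω) = X`). -/
noncomputable def relRange (X : Set V) (α : List A) : Set V :=
  if α = [] then X
  else {v | ∃ (l : List Ed) (h : l ≠ []), List.Chain' (fun e f => Λ.rng e = Λ.src f) l ∧
        l.map Λ.lab = α ∧ Λ.src (l.head h) ∈ X ∧ Λ.rng (l.getLast h) = v}

/-- The range `r(α) = r(E⁰, α)`. -/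
noncomputable def rangeL (α : List A) : Set V := Λ.relRange Set.univ α

/-- `𝒜^α = {X ∈ 𝒜 : X ⊆ r(α)}`. -/
noncomputable def Aset (α : List A) : Set (Set V) := {X | X ∈ Λ.𝒜 ∧ X ⊆ Λ.rangeL α}

/-- `(E, ℒ, 𝒜)` is a labelled space: `𝒜` is closed under finite intersections and
unions, contains all ranges `r(α)` for `α ∈ ℒ^{≥1}`, and is closed under relative ranges. -/
structure IsLS : Prop where
  inter_mem : ∀ X ∈ Λ.𝒜, ∀ Y ∈ Λ.𝒜, X ∩ Y ∈ Λ.𝒜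
  union_mem : ∀ X ∈ Λ.𝒜, ∀ Y ∈ Λ.𝒜, X ∪ Y ∈ Λ.𝒜
  range_mem : ∀ α ∈ Λ.LStar, α ≠ [] → Λ.rangeL α ∈ Λ.𝒜
  relRange_mem : ∀ X ∈ Λ.𝒜, ∀ α ∈ Λ.LStar, Λ.relRange X α ∈ Λ.𝒜

/-- A weakly left-resolving labelled space. -/
structure IsWLR : Prop where
  toIsLS : Λ.IsLS
  wlr : ∀ X ∈ Λ.𝒜, ∀ Y ∈ Λ.𝒜, ∀ α ∈ Λ.LStar, α ≠ [] →
    Λ.relRange (X ∩ Y) α = Λ.relRange X α ∩ Λ.relRange Y α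

/-- A weakly left-resolving normal labelled space. -/
structure IsNormal : Prop where
  toIsWLR : Λ.IsWLR
  sdiff_mem : ∀ X ∈ Λ.𝒜, ∀ Y ∈ Λ.𝒜, X \ Y ∈ Λ.𝒜

/-! ## The inverse semigroup `S` -/

/-- The underlying set of the inverse semigroup
`S = {(α,A,β) : α, β ∈ ℒ^*, A ∈ 𝒜^α ∩ 𝒜^β, A ≠ ∅} ∪ {0}`. -/
def SSet : Set (Tr V A) :=
  {t | t = Tr.zero ∨ ∃ α X β, t = Tr.mk α X β ∧ α ∈ Λ.LStar ∧ β ∈ Λ.LStar ∧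
    X ∈ Λ.Aset α ∧ X ∈ Λ.Aset β ∧ X.Nonempty}

/-- The semilattice of idempotents `E(S) = {(α,A,α)} ∪ {0}`. -/
def ESet : Set (Tr V A) :=
  {t | t = Tr.zero ∨ ∃ α X, t = Tr.mk α X α ∧ α ∈ Λ.LStar ∧ X ∈ Λ.Aset α ∧ X.Nonempty}

/-- The product of `S`. -/
noncomputable def tmul : Tr V A → Tr V A → Tr V A
  | Tr.zero, _ => Tr.zero
  | Tr.mk _ _ _, Tr.zero => Tr.zero
  | Tr.mk α X β, Tr.mk γ Y δ =>
    if β <+: γ ∧ (Λ.relRange X (γ.drop β.length) ∩ Y).Nonempty then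
      Tr.mk (α ++ γ.drop β.length) (Λ.relRange X (γ.drop β.length) ∩ Y) δ
    else if γ <+: β ∧ (X ∩ Λ.relRange Y (β.drop γ.length)).Nonempty then
      Tr.mk α (X ∩ Λ.relRange Y (β.drop γ.length)) (δ ++ β.drop γ.length)
    else Tr.zero

/-! ## Filters in `E(S)`, characters, and the tight spectrum -/

/-- A filter in `E(S)`: a nonempty subset of `E(S) ∖ {0}` closed under products and
upward closed in the natural order (`p ≤ q ↔ pq = p`). -/
def IsFilterES (ξ : Set (Tr V A)) : Prop :=
  ξ.Nonempty ∧ (∀ t ∈ ξ, t ∈ Λ.ESet ∧ t ≠ Tr.zero) ∧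
  (∀ p ∈ ξ, ∀ q ∈ ξ, Λ.tmul p q ∈ ξ) ∧
  (∀ p ∈ ξ, ∀ q ∈ Λ.ESet, Λ.tmul p q = p → q ∈ ξ)

/-- An ultrafilter in `E(S)`. -/
def IsUltraES (ξ : Set (Tr V A)) : Prop :=
  Λ.IsFilterES ξ ∧ ∀ ζ, Λ.IsFilterES ζ → ξ ⊆ ζ → ξ = ζ

/-- The character (indicator function) of a filter. -/
noncomputable def charOf (_Λ : LblSp V Ed A) (ξ : Set (Tr V A)) : Tr V A → Bool :=
  fun t => if t ∈ ξ then true else false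

/-- A character of `E(S)`: a nonzero, zero- and meet-preserving `{0,1}`-valued map on
`E(S)` (encoded as a map on triples vanishing outside `E(S)`). -/
def IsChar (φ : Tr V A → Bool) : Prop :=
  (∃ e, φ e = true) ∧ (∀ e, e ∉ Λ.ESet → φ e = false) ∧ φ Tr.zero = false ∧
  ∀ e ∈ Λ.ESet, ∀ f ∈ Λ.ESet, φ (Λ.tmul e f) = (φ e && φ f)

/-- The tight spectrum `Ê_tight`: the closure, within the space of characters with the
topology of pointwise convergence, of the set of characters of ultrafilters. -/
def tightSpectrum : Set (Tr V A → Bool) :=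
  {φ | Λ.IsChar φ} ∩ closure {φ | ∃ ξ, Λ.IsUltraES ξ ∧ φ = Λ.charOf ξ}

/-- A tight filter: a filter whose character lies in the tight spectrum. -/
def IsTightFilter (ξ : Set (Tr V A)) : Prop :=
  Λ.IsFilterES ξ ∧ Λ.charOf ξ ∈ Λ.tightSpectrum

/-- `ξ_{|β|} = {B : (β, B, β) ∈ ξ}`, the filter of `ξ` at level `β`. -/
def filterAt (_Λ : LblSp V Ed A) (ξ : Set (Tr V A)) (β : List A) : Set (Set V) :=
  {B | Tr.mk β B β ∈ ξ}

/-- `α` is the word associated with the filter `ξ` (i.e. `ξ = ξ^α`): the nonempty finite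
beginnings of `α` are exactly the words appearing in elements of `ξ`. -/
def HasWord (_Λ : LblSp V Ed A) (ξ : Set (Tr V A)) (α : Word A) : Prop :=
  ∀ β : List A, β ≠ [] → ((∃ B, Tr.mk β B β ∈ ξ) ↔ WPrefix β α)

/-! ## Filters and ultrafilters in `𝒜^β` -/

/-- A filter in the Boolean algebra `𝒜^β`. -/
def IsFilterAset (β : List A) (F : Set (Set V)) : Prop :=
  F.Nonempty ∧ F ⊆ Λ.Aset β ∧ (∀ X ∈ F, X.Nonempty) ∧
  (∀ X ∈ F, ∀ Y ∈ F, X ∩ Y ∈ F) ∧ (∀ X ∈ F, ∀ Y ∈ Λ.Aset β, X ⊆ Y → Y ∈ F)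

/-- An ultrafilter in `𝒜^β` (an element of `X_β`). -/
def IsUltraAset (β : List A) (F : Set (Set V)) : Prop :=
  Λ.IsFilterAset β F ∧ ∀ G, Λ.IsFilterAset β G → F ⊆ G → F = G

/-- The gluing map `g_{(α)β}(F) = {C ∩ r(αβ) : C ∈ F}` on ultrafilters. -/
noncomputable def gmap (α β : List A) (F : Set (Set V)) : Set (Set V) :=
  {X | ∃ C ∈ F, X = C ∩ Λ.rangeL (α ++ β)}

/-- The cutting map `h_{[α]β}(F) = {C ∈ 𝒜^β : D ⊆ C for some D ∈ F}` on ultrafilters. -/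
noncomputable def hmap (α β : List A) (F : Set (Set V)) : Set (Set V) :=
  {C | C ∈ Λ.Aset β ∧ ∃ D ∈ F, D ⊆ C}

/-! ## Cutting and gluing of (tight) filters in `E(S)` -/

/-- The cutting map `H_{[α]β} : T^{αβ} → T^{(α)β}` (word-free formulation): the filter
whose family is `η_n = h_{[α]β_{1,n}}(ξ_{n+|α|})`; `H_{[ω]β}` is the identity. -/
noncomputable def Hcut (α : List A) (ξ : Set (Tr V A)) : Set (Tr V A) :=
  if α = [] then ξ
  else {t | ∃ δ B, t = Tr.mk δ B δ ∧ B ∈ Λ.Aset δ ∧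
        ∃ D, Tr.mk (α ++ δ) D (α ++ δ) ∈ ξ ∧ D ⊆ B}

/-- The gluing map `G_{(α)β} : T^{(α)β} → T^{αβ}` (word-free formulation): the filter with
family `η_{|α|+n} = g_{(α)β_{1,n}}(ξ_n)` for `n ≥ 1` and `η_i = f_{α_{1,i}[…]}(…)` for
`i ≤ |α|`, with the two cases according to whether the word of `ξ` is empty (`β = ω`)
or not; `G_{(ω)β}` is the identity. -/
noncomputable def Gglue (α : List A) (ξ : Set (Tr V A)) : Set (Tr V A) :=
  if α = [] then ξ
  else if ∃ (δ : List A) (B : Set V), δ ≠ [] ∧ Tr.mk δ B δ ∈ ξ then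
    {t | ∃ δ B, t = Tr.mk δ B δ ∧
      ((α <+: δ ∧ α ≠ δ ∧ ∃ C, Tr.mk (δ.drop α.length) C (δ.drop α.length) ∈ ξ ∧
          B = C ∩ Λ.rangeL δ) ∨
       (δ <+: α ∧ B ∈ Λ.Aset δ ∧ ∃ (b : A) (C : Set V), Tr.mk [b] C [b] ∈ ξ ∧
          Λ.relRange B (α.drop δ.length ++ [b]) = C ∩ Λ.rangeL (α ++ [b])))}
  else
    {t | ∃ δ B, t = Tr.mk δ B δ ∧ δ <+: α ∧ B ∈ Λ.Aset δ ∧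
      ∃ C, Tr.mk [] C [] ∈ ξ ∧ Λ.relRange B (α.drop δ.length) = C ∩ Λ.rangeL α}

/-- `T^β`: the set of tight filters with associated word `β`. -/
def TWord (β : Word A) : Set (Set (Tr V A)) :=
  {ξ | Λ.IsTightFilter ξ ∧ Λ.HasWord ξ β}

/-- `T^{(α)β} = {ξ ∈ T^β : r(α) ∈ ξ_0}` (equal to `T^β` when `α = ω`), the domain of the
gluing map `G_{(α)β}`. -/
def TGlueDom (α : List A) (β : Word A) : Set (Set (Tr V A)) :=
  {ξ | Λ.IsTightFilter ξ ∧ Λ.HasWord ξ β ∧ (α ≠ [] → Tr.mk [] (Λ.rangeL α) [] ∈ ξ)}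

/-! ## The groupoid `Γ` -/

/-- The defining relation of
`Γ = {(ξ^{aγ}, |a|-|b|, η^{bγ}) ∈ T × ℤ × T : H_{[a]γ}(ξ^{aγ}) = H_{[b]γ}(η^{bγ})}`. -/
def InGamma (η : Set (Tr V A)) (m : ℤ) (ξ : Set (Tr V A)) : Prop :=
  ∃ (a b : List A) (γ : Word A), a ∈ Λ.LStar ∧ b ∈ Λ.LStar ∧ Λ.IsWordW γ ∧
    η ∈ Λ.TWord (wappend a γ) ∧ ξ ∈ Λ.TWord (wappend b γ) ∧
    m = (a.length : ℤ) - (b.length : ℤ) ∧ Λ.Hcut a η = Λ.Hcut b ξ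

/-- `Γ` as a set of raw triples. -/
def GammaRaw : Set (Set (Tr V A) × ℤ × Set (Tr V A)) :=
  {p | Λ.InGamma p.1 p.2.1 p.2.2}

/-- The basic set `Z_{s,e:e₁,…,eₙ}` of `Γ` (raw version), for `s = (μ, X, ν)`:
triples `(η^{μγ}, |μ|-|ν|, ξ^{νγ}) ∈ Γ` with `e ∈ ξ`, `eᵢ ∉ ξ` and
`H_{[μ]γ}(η) = H_{[ν]γ}(ξ)`. -/
noncomputable def ZrawGen (μ ν : List A) (e : Tr V A) (es : List (Tr V A)) :
    Set (Set (Tr V A) × ℤ × Set (Tr V A)) :=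
  {p | Λ.InGamma p.1 p.2.1 p.2.2 ∧ p.2.1 = (μ.length : ℤ) - (ν.length : ℤ) ∧
       e ∈ p.2.2 ∧ (∀ f ∈ es, f ∉ p.2.2) ∧
       ∃ γ : Word A, Λ.HasWord p.1 (wappend μ γ) ∧ Λ.HasWord p.2.2 (wappend ν γ) ∧
         Λ.Hcut μ p.1 = Λ.Hcut ν p.2.2}

/-- `Z_s = Z_{s, s*s}` for `s = (μ, X, ν)` (raw version). -/
noncomputable def Zraw (μ : List A) (X : Set V) (ν : List A) :
    Set (Set (Tr V A) × ℤ × Set (Tr V A)) :=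
  Λ.ZrawGen μ ν (Tr.mk ν X ν) []

/-- The basic set `V_{e:e₁,…,eₙ} = U_{e:e₁,…,eₙ} ∩ T` of the tight filter space
(raw version). -/
def VrawGen (e : Tr V A) (es : List (Tr V A)) : Set (Set (Tr V A)) :=
  {ξ | Λ.IsTightFilter ξ ∧ e ∈ ξ ∧ ∀ f ∈ es, f ∉ ξ}

/-- The shift map `σ : T^{(1)} → T`, `σ(ξ^{aγ}) = H_{[a]γ}(ξ^{aγ})` (extended by the
identity off its domain). -/
noncomputable def sigmaMap (ξ : Set (Tr V A)) : Set (Tr V A) :=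
  if h : ∃ a : A, ∃ B : Set V, Tr.mk [a] B [a] ∈ ξ then Λ.Hcut [h.choose] ξ else ξ

/-- The Renault–Deaconu basic set
`𝒱(X, Y, m, n) = {(η, m-n, ξ) ∈ Γ : (η, ξ) ∈ X × Y, σ^m(η) = σ^n(ξ)}` (raw version). -/
noncomputable def VrdRaw (Xs Ys : Set (Set (Tr V A))) (m n : ℕ) :
    Set (Set (Tr V A) × ℤ × Set (Tr V A)) :=
  {p | Λ.InGamma p.1 p.2.1 p.2.2 ∧ p.2.1 = (m : ℤ) - (n : ℤ) ∧
       p.1 ∈ Xs ∧ p.2.2 ∈ Ys ∧ (Λ.sigmaMap)^[m] p.1 = (Λ.sigmaMap)^[n] p.2.2}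

/-! ## The groupoid of germs `𝒢_tight` -/

/-- The action `θ_s(φ)(e) = φ(s* e s)` of `S` on characters. -/
noncomputable def theta (s : Tr V A) (φ : Tr V A → Bool) : Tr V A → Bool :=
  fun e => if e ∈ Λ.ESet then φ (Λ.tmul (Λ.tmul (Tr.tstar s) e) s) else false

/-- `Ω = {(s, φ) ∈ S × Ê_tight : φ ∈ D_{s*s}}`. -/
noncomputable def Omega : Set (Tr V A × (Tr V A → Bool)) :=
  {p | p.1 ∈ Λ.SSet ∧ p.2 ∈ Λ.tightSpectrum ∧ p.2 (Λ.tmul (Tr.tstar p.1) p.1) = true}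

/-- The germ equivalence relation on `Ω`: `(s,φ) ∼ (t,ψ)` iff `φ = ψ` and there is
`e ∈ E(S)` with `φ(e) = 1` and `se = te`. -/
noncomputable def germEquiv (p q : Tr V A × (Tr V A → Bool)) : Prop :=
  p.2 = q.2 ∧ ∃ e ∈ Λ.ESet, p.2 e = true ∧ Λ.tmul p.1 e = Λ.tmul q.1 e

/-- The map `Φ` at the level of `Ω`: for `t = (β, X, γ)` and `φ` with filter `ξ^α`
(where `α = γα'`), `Φ[t,φ] = ((G_{(β)α'} ∘ H_{[γ]α'})(ξ^α), |β|-|γ|, ξ^α)`. -/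
noncomputable def PhiRaw : Tr V A → (Tr V A → Bool) → Set (Tr V A) × ℤ × Set (Tr V A)
  | Tr.zero, _ => (∅, 0, ∅)
  | Tr.mk β _ γ, φ =>
      (Λ.Gglue β (Λ.Hcut γ {e | φ e = true}), (β.length : ℤ) - (γ.length : ℤ),
        {e | φ e = true})

/-! ## Miscellaneous notions -/

/-- `ℒ(XE¹) = {ℒ(e) : e ∈ E¹, s(e) ∈ X}`. -/
def labE (X : Set V) : Set A := {a | ∃ e, Λ.lab e = a ∧ Λ.src e ∈ X}

/-- The set `E⁰_sink` of sinks. -/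
def sinks : Set V := {v | ∀ e, Λ.src e ≠ v}

/-- The filter in `E(S)` associated with a pair (word, complete family). -/
def pairFilter (_Λ : LblSp V Ed A) (α : Word A) (F : ℕ → Set (Set V)) : Set (Tr V A) :=
  {t | ∃ (n : ℕ) (B : Set V), (n : ℕ∞) ≤ wlength α ∧ B ∈ F n ∧
    t = Tr.mk (wprefix α n) B (wprefix α n)}

/-- A complete family for the word `α`: `F n` is a filter in `𝒜^{α_{1,n}}` for
`1 ≤ n ≤ |α|` (`F 0` is a filter in `𝒜` or empty, and a filter if `α = ω`), and
`F n = {X ∈ 𝒜^{α_{1,n}} : r(X, α_{n+1}) ∈ F (n+1)}` for all `n < |α|`. -/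
noncomputable def IsCompleteFamily (α : Word A) (F : ℕ → Set (Set V)) : Prop :=
  Λ.IsWordW α ∧
  (∀ n : ℕ, 1 ≤ n → (n : ℕ∞) ≤ wlength α → Λ.IsFilterAset (wprefix α n) (F n)) ∧
  (F 0 = ∅ ∨ Λ.IsFilterAset [] (F 0)) ∧
  (wlength α = 0 → Λ.IsFilterAset [] (F 0)) ∧
  (∀ n : ℕ, ((n + 1 : ℕ) : ℕ∞) ≤ wlength α →
    F n = {X | X ∈ Λ.Aset (wprefix α n) ∧
      Λ.relRange X ((wprefix α (n + 1)).drop n) ∈ F (n + 1)})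

/-! ## The tight filter space `T` and the groupoid `Γ` as types -/

/-- The space `T` of tight filters. -/
structure TightT where
  carrier : Set (Tr V A)
  tight : Λ.IsTightFilter carrier

/-- The topology of `T`, induced from pointwise convergence of characters. -/
noncomputable instance : TopologicalSpace Λ.TightT :=
  TopologicalSpace.induced (fun ξ => Λ.charOf ξ.carrier) inferInstance

/-- The groupoid `Γ ⊆ T × ℤ × T` as a type. -/
structure GammaT where
  fst : Λ.TightT
  mid : ℤ
  lst : Λ.TightT
  mem : Λ.InGamma fst.carrier mid lst.carrier

/-- The raw triple underlying an element of `Γ`. -/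
def rawOf (p : Λ.GammaT) : Set (Tr V A) × ℤ × Set (Tr V A) :=
  (p.fst.carrier, p.mid, p.lst.carrier)

/-- The collection of all sets `Z_{s,e:e₁,…,eₙ}` (for `s ∈ S`, `e, eᵢ ∈ E(S)`),
as subsets of `Γ`. -/
noncomputable def ZBasisT : Set (Set Λ.GammaT) :=
  {Z | ∃ (μ : List A) (X : Set V) (ν : List A) (e : Tr V A) (es : List (Tr V A)),
    Tr.mk μ X ν ∈ Λ.SSet ∧ e ∈ Λ.ESet ∧ (∀ f ∈ es, f ∈ Λ.ESet) ∧
    Z = {p : Λ.GammaT | Λ.rawOf p ∈ Λ.ZrawGen μ ν e es}}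

/-- The topology on `Γ` induced by the isomorphism `Φ` from the germ topology of
`𝒢_tight`, generated by the images of the basic sets `Θ(s, 𝒰)` with `𝒰 ⊆ D_{s*s}`
open in the tight spectrum. -/
noncomputable def PhiTopology : TopologicalSpace Λ.GammaT :=
  TopologicalSpace.generateFrom
    {Z | ∃ (s : Tr V A) (U : Set (Tr V A → Bool)), s ∈ Λ.SSet ∧
      (∃ W, IsOpen W ∧ U = W ∩ Λ.tightSpectrum) ∧
      (∀ φ ∈ U, φ (Λ.tmul (Tr.tstar s) s) = true) ∧
      Z = {p : Λ.GammaT | ∃ φ ∈ U, (s, φ) ∈ Λ.Omega ∧ Λ.PhiRaw s φ = Λ.rawOf p}}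

end LblSp

/-!
For `s = (β, X, γ)` the idempotent `s* (δ, B, δ) s` is `(γε, r(X, ε) ∩ B, γε)` if `δ = βε`,
`(γ, X ∩ r(B, ε), γ)` if `β = δε`, and `0` otherwise (or when that set is empty), so `θ_s(φ)`
is the indicator of those `(δ, B, δ)` for which it lies in `ξ`. Since `(γ, X, γ) ∈ ξ`, the cut
filter `η = H_{[γ]α'}(ξ)` satisfies `(ε, C, ε) ∈ η ↔ (γε, r(X, ε) ∩ C, γε) ∈ ξ`. Comparing with
the definition of the gluing map, what remains is to find `C` with `C ∩ r(βε) = B`, resp.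
`C ∩ r(βb) = r(B, εb)` for a letter `b` of the word of `η`; normality provides
`C = B ∪ (r(ε) ∖ r(βε))`, resp. `C = r(B, εb) ∪ (r(b) ∖ r(βb))`. Finally `η` is tight because
cutting maps ultrafilters to ultrafilters (an idempotent meeting every member of an ultrafilter
belongs to it) and is continuous on characters.
-/

namespace LblSp

variable {V : Type u} {Ed : Type v} {A : Type w} (Λ : LblSp V Ed A)

variable {Λ}

theorem _root_.Set.inter_inter_eq_inter_of_subset {α : Type*} {R C Y : Set α} (h : R ⊆ Y) :
    R ∩ (C ∩ Y) = R ∩ C := by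
  rw [Set.inter_comm C, ← Set.inter_assoc, Set.inter_eq_left.mpr h]

section RelativeRange

theorem relRange_nil (X : Set V) : Λ.relRange X [] = X := if_pos rfl

theorem rangeL_nil : Λ.rangeL ([] : List A) = Set.univ := relRange_nil _

theorem mem_relRange {α : List A} (hα : α ≠ []) {X : Set V} {v : V} :
    v ∈ Λ.relRange X α ↔ ∃ (l : List Ed) (h : l ≠ []),
      List.IsChain (fun e f => Λ.rng e = Λ.src f) l ∧
      l.map Λ.lab = α ∧ Λ.src (l.head h) ∈ X ∧ Λ.rng (l.getLast h) = v := by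
  rw [LblSp.relRange, if_neg hα]; rfl

theorem relRange_mono {X Y : Set V} (h : X ⊆ Y) (α : List A) :
    Λ.relRange X α ⊆ Λ.relRange Y α := by
  rcases eq_or_ne α [] with rfl | hα
  · simpa only [relRange_nil] using h
  · intro v hv
    rw [mem_relRange hα] at hv ⊢
    obtain ⟨l, hl, hc, hm, hs, hr⟩ := hv
    exact ⟨l, hl, hc, hm, h hs, hr⟩

theorem relRange_subset_rangeL (X : Set V) (α : List A) :
    Λ.relRange X α ⊆ Λ.rangeL α :=
  relRange_mono (Set.subset_univ X) α

theorem nonempty_of_relRange_nonempty {X : Set V} {α : List A}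
    (h : (Λ.relRange X α).Nonempty) : X.Nonempty := by
  rcases eq_or_ne α [] with rfl | hα
  · rwa [relRange_nil] at h
  · obtain ⟨v, hv⟩ := h
    obtain ⟨l, hl, -, -, hs, -⟩ := (mem_relRange hα).mp hv
    exact ⟨_, hs⟩

theorem relRange_relRange_subset (X : Set V) {α β : List A} (hα : α ≠ []) (hβ : β ≠ []) :
    Λ.relRange (Λ.relRange X α) β ⊆ Λ.relRange X (α ++ β) := by
  rintro v hv
  obtain ⟨l₂, hl₂, hc₂, hm₂, hs₂, hr₂⟩ := (mem_relRange hβ).mp hv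
  obtain ⟨l₁, hl₁, hc₁, hm₁, hs₁, hr₁⟩ := (mem_relRange hα).mp hs₂
  refine (mem_relRange (by simp [hα])).mpr ⟨l₁ ++ l₂, by simp [hl₁], ?_, ?_, ?_, ?_⟩
  · rw [List.isChain_append]
    refine ⟨hc₁, hc₂, fun x hx y hy => ?_⟩
    rw [List.getLast?_eq_some_getLast hl₁, Option.mem_some_iff] at hx
    rw [List.head?_eq_some_head hl₂, Option.mem_some_iff] at hy
    rw [← hx, ← hy, hr₁]
  · rw [List.map_append, hm₁, hm₂]
  · rwa [List.head_append, dif_neg (by simpa using hl₁)]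
  · rwa [List.getLast_append, dif_neg (by simpa using hl₂)]

theorem relRange_append_subset (X : Set V) {α β : List A} (hα : α ≠ []) (hβ : β ≠ []) :
    Λ.relRange X (α ++ β) ⊆ Λ.relRange (Λ.relRange X α) β := by
  rintro v hv
  obtain ⟨l, hl, hc, hm, hs, hr⟩ := (mem_relRange (by simp [hα])).mp hv
  have htm : (l.take α.length).map Λ.lab = α := by rw [List.map_take, hm, List.take_left]
  have hdm : (l.drop α.length).map Λ.lab = β := by rw [List.map_drop, hm, List.drop_left]
  have ht : l.take α.length ≠ [] := by rintro h; rw [h] at htm; exact hα htm.symm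
  have hd : l.drop α.length ≠ [] := by rintro h; rw [h] at hdm; exact hβ hdm.symm
  have hc' := hc
  rw [← List.take_append_drop α.length l, List.isChain_append] at hc'
  obtain ⟨hc₁, hc₂, hlink⟩ := hc'
  refine (mem_relRange hβ).mpr ⟨l.drop α.length, hd, hc₂, hdm, ?_, ?_⟩
  · refine (mem_relRange hα).mpr ⟨l.take α.length, ht, hc₁, htm, ?_, ?_⟩
    · rwa [List.head_take ht]
    · exact hlink _ (by rw [List.getLast?_eq_some_getLast ht]; rfl) _
        (by rw [List.head?_eq_some_head hd]; rfl)
  · rwa [List.getLast_drop hd]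

theorem relRange_relRange (X : Set V) (α β : List A) :
    Λ.relRange (Λ.relRange X α) β = Λ.relRange X (α ++ β) := by
  rcases eq_or_ne α [] with rfl | hα
  · rw [relRange_nil, List.nil_append]
  rcases eq_or_ne β [] with rfl | hβ
  · rw [relRange_nil, List.append_nil]
  exact (relRange_relRange_subset X hα hβ).antisymm (relRange_append_subset X hα hβ)

theorem rangeL_append (α β : List A) :
    Λ.rangeL (α ++ β) = Λ.relRange (Λ.rangeL α) β :=
  (relRange_relRange _ _ _).symm

theorem rangeL_append_subset (α β : List A) : Λ.rangeL (α ++ β) ⊆ Λ.rangeL β := by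
  rw [rangeL_append]
  exact relRange_subset_rangeL _ _

theorem relRange_subset_rangeL_append {X : Set V} {α : List A} (hX : X ⊆ Λ.rangeL α)
    (β : List A) : Λ.relRange X β ⊆ Λ.rangeL (α ++ β) := by
  rw [rangeL_append]
  exact relRange_mono hX β

end RelativeRange

section LabelledPaths

theorem nil_mem_LStar : ([] : List A) ∈ Λ.LStar := Or.inl rfl

theorem mem_LStar_of_relRange_nonempty {X : Set V} {α : List A}
    (h : (Λ.relRange X α).Nonempty) : α ∈ Λ.LStar := by
  rcases eq_or_ne α [] with rfl | hα
  · exact nil_mem_LStar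
  · obtain ⟨v, hv⟩ := h
    obtain ⟨l, hl, hc, hm, -, -⟩ := (mem_relRange hα).mp hv
    exact Or.inr ⟨l, hl, hc, hm⟩

theorem take_mem_LStar {α : List A} (h : α ∈ Λ.LStar) (n : ℕ) : α.take n ∈ Λ.LStar := by
  rcases h with rfl | ⟨l, -, hc, hm⟩
  · simpa using nil_mem_LStar
  rcases eq_or_ne (α.take n) [] with h0 | h0
  · rw [h0]; exact nil_mem_LStar
  have hmap : (l.take n).map Λ.lab = α.take n := by rw [List.map_take, hm]
  refine Or.inr ⟨l.take n, ?_, hc.prefix (List.take_prefix _ _), hmap⟩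
  rintro hln
  rw [hln] at hmap
  exact h0 hmap.symm

theorem drop_mem_LStar {α : List A} (h : α ∈ Λ.LStar) (n : ℕ) : α.drop n ∈ Λ.LStar := by
  rcases h with rfl | ⟨l, -, hc, hm⟩
  · simpa using nil_mem_LStar
  rcases eq_or_ne (α.drop n) [] with h0 | h0
  · rw [h0]; exact nil_mem_LStar
  have hmap : (l.drop n).map Λ.lab = α.drop n := by rw [List.map_drop, hm]
  refine Or.inr ⟨l.drop n, ?_, hc.suffix (List.drop_suffix _ _), hmap⟩
  rintro hln
  rw [hln] at hmap
  exact h0 hmap.symm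

theorem mem_LStar_of_prefix {α β : List A} (h : β <+: α) (hα : α ∈ Λ.LStar) :
    β ∈ Λ.LStar := by
  rw [List.prefix_iff_eq_take.mp h]
  exact take_mem_LStar hα _

theorem mem_LStar_of_append_mem {α β : List A} (h : α ++ β ∈ Λ.LStar) : β ∈ Λ.LStar := by
  simpa using drop_mem_LStar h α.length

end LabelledPaths

section AccommodatingFamily

theorem IsLS.inter_rangeL_mem (hLS : Λ.IsLS) {B : Set V} (hB : B ∈ Λ.𝒜) {μ : List A}
    (hμ : μ ∈ Λ.LStar) : B ∩ Λ.rangeL μ ∈ Λ.𝒜 := by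
  rcases eq_or_ne μ [] with rfl | hne
  · rwa [rangeL_nil, Set.inter_univ]
  · exact hLS.inter_mem B hB _ (hLS.range_mem μ hμ hne)

theorem IsWLR.relRange_inter (hW : Λ.IsWLR) {X Y : Set V} (hX : X ∈ Λ.𝒜) (hY : Y ∈ Λ.𝒜)
    {α : List A} (hα : α ∈ Λ.LStar) :
    Λ.relRange (X ∩ Y) α = Λ.relRange X α ∩ Λ.relRange Y α := by
  rcases eq_or_ne α [] with rfl | hne
  · simp only [relRange_nil]
  · exact hW.wlr X hX Y hY α hα hne

theorem IsWLR.relRange_inter_rangeL (hW : Λ.IsWLR) {C : Set V} (hC : C ∈ Λ.𝒜)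
    {μ ν : List A} (hμ : μ ∈ Λ.LStar) (hν : ν ∈ Λ.LStar) :
    Λ.relRange (C ∩ Λ.rangeL μ) ν = Λ.relRange C ν ∩ Λ.rangeL (μ ++ ν) := by
  rcases eq_or_ne μ [] with rfl | hμne
  · rw [rangeL_nil, Set.inter_univ, List.nil_append,
      Set.inter_eq_left.mpr (relRange_subset_rangeL _ _)]
  · rw [hW.relRange_inter hC (hW.toIsLS.range_mem μ hμ hμne) hν, rangeL_append]

theorem IsNormal.exists_inter_eq (hΛ : Λ.IsNormal) {B Y Z : Set V} (hB : B ∈ Λ.𝒜)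
    (hY : Y ∈ Λ.𝒜) (hZ : Z ∈ Λ.𝒜) (hBY : B ⊆ Y) (hYZ : Y ⊆ Z) :
    ∃ C ∈ Λ.𝒜, C ⊆ Z ∧ C ∩ Y = B := by
  refine ⟨B ∪ Z \ Y, hΛ.toIsWLR.toIsLS.union_mem _ hB _ (hΛ.sdiff_mem _ hZ _ hY),
    Set.union_subset (hBY.trans hYZ) Set.sdiff_subset, ?_⟩
  rw [Set.union_inter_distrib_right, Set.inter_eq_left.mpr hBY, Set.sdiff_inter_self,
    Set.union_empty]

end AccommodatingFamily

section Idempotents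

theorem zero_mem_ESet : (Tr.zero : Tr V A) ∈ Λ.ESet := Or.inl rfl

theorem mk_mem_ESet {δ : List A} {B : Set V} (h1 : δ ∈ Λ.LStar) (h2 : B ∈ Λ.Aset δ)
    (h3 : B.Nonempty) : Tr.mk δ B δ ∈ Λ.ESet :=
  Or.inr ⟨δ, B, rfl, h1, h2, h3⟩

theorem mk_mem_ESet_iff {δ δ' : List A} {B : Set V} :
    Tr.mk δ B δ' ∈ Λ.ESet ↔ δ' = δ ∧ B ∈ Λ.Aset δ ∧ B.Nonempty := by
  constructor
  · rintro (h | ⟨a, Y, h, -, hY, hne⟩)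
    · cases h
    · obtain ⟨rfl, rfl, rfl⟩ := Tr.mk.inj h
      exact ⟨rfl, hY, hne⟩
  · rintro ⟨rfl, hB, hne⟩
    exact mk_mem_ESet (mem_LStar_of_relRange_nonempty (hne.mono hB.2)) hB hne

theorem tmul_mk (a b a' b' : List A) (B C : Set V) :
    Λ.tmul (Tr.mk a B a') (Tr.mk b C b') =
      if a' <+: b ∧ (Λ.relRange B (b.drop a'.length) ∩ C).Nonempty then
        Tr.mk (a ++ b.drop a'.length) (Λ.relRange B (b.drop a'.length) ∩ C) b'
      else if b <+: a' ∧ (B ∩ Λ.relRange C (a'.drop b.length)).Nonempty then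
        Tr.mk a (B ∩ Λ.relRange C (a'.drop b.length)) (b' ++ a'.drop b.length)
      else Tr.zero := rfl

theorem tmul_zero (t : Tr V A) : Λ.tmul t Tr.zero = Tr.zero := by
  cases t <;> rfl

theorem zero_tmul (t : Tr V A) : Λ.tmul Tr.zero t = Tr.zero := rfl

theorem tmul_of_prefix_left {a b : List A} {B C : Set V} (h : a <+: b)
    (hne : (Λ.relRange B (b.drop a.length) ∩ C).Nonempty) :
    Λ.tmul (Tr.mk a B a) (Tr.mk b C b) =
      Tr.mk b (Λ.relRange B (b.drop a.length) ∩ C) b := by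
  rw [tmul_mk, if_pos ⟨h, hne⟩, List.prefix_iff_eq_append.mp h]

theorem tmul_mk_comm (a b : List A) (B C : Set V) :
    Λ.tmul (Tr.mk a B a) (Tr.mk b C b) = Λ.tmul (Tr.mk b C b) (Tr.mk a B a) := by
  rw [tmul_mk, tmul_mk]
  split_ifs with h₁ h₂ h₃ h₄ h₅ h₆ h₇ h₈ <;>
    simp only [Set.inter_comm, not_and] at * <;> try tauto
  · obtain rfl := h₁.1.eq_of_length (le_antisymm h₁.1.length_le h₂.1.length_le)
    simp only [List.drop_length, relRange_nil, Set.inter_comm]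
  · rw [List.prefix_iff_eq_append.mp h₁.1, Set.inter_comm]
  · rw [List.prefix_iff_eq_append.mp h₅.1, Set.inter_comm]

-- `tmul p q = p` is the natural order `p ≤ q` of `E(S)`; lemma names below use `le` for it.
theorem tmul_mk_eq_left_iff {a b : List A} {B C : Set V} (hB : B.Nonempty) :
    Λ.tmul (Tr.mk a B a) (Tr.mk b C b) = Tr.mk a B a ↔
      b <+: a ∧ B ⊆ Λ.relRange C (a.drop b.length) := by
  rw [tmul_mk]
  split_ifs with h1 h2
  · constructor
    · intro heq
      obtain ⟨-, h4, rfl⟩ := Tr.mk.inj heq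
      simp only [List.drop_length, relRange_nil] at h4 ⊢
      exact ⟨List.prefix_refl _, Set.inter_eq_left.mp h4⟩
    · rintro ⟨hba, hsub⟩
      obtain rfl := h1.1.eq_of_length (le_antisymm h1.1.length_le hba.length_le)
      simp only [List.drop_length, relRange_nil, List.append_nil] at hsub ⊢
      rw [Set.inter_eq_left.mpr hsub]
  · constructor
    · intro heq
      exact ⟨h2.1, Set.inter_eq_left.mp (Tr.mk.inj heq).2.1⟩
    · rintro ⟨hba, hsub⟩
      rw [Set.inter_eq_left.mpr hsub, List.prefix_iff_eq_append.mp hba]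
  · refine ⟨nofun, fun ⟨hba, hsub⟩ => absurd ⟨hba, ?_⟩ h2⟩
    rwa [Set.inter_eq_left.mpr hsub]

theorem tmul_mem_ESet (hLS : Λ.IsLS) {p q : Tr V A} (hp : p ∈ Λ.ESet) (hq : q ∈ Λ.ESet) :
    Λ.tmul p q ∈ Λ.ESet := by
  rcases hp with rfl | ⟨a, B, rfl, ha, hBa, -⟩
  · exact zero_mem_ESet
  rcases hq with rfl | ⟨b, C, rfl, hb, hCb, -⟩
  · rw [tmul_zero]; exact zero_mem_ESet
  rw [tmul_mk]
  split_ifs with h1 h2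
  · rw [List.prefix_iff_eq_append.mp h1.1]
    exact mk_mem_ESet hb ⟨hLS.inter_mem _ (hLS.relRange_mem _ hBa.1 _ (drop_mem_LStar hb _))
      _ hCb.1, Set.inter_subset_right.trans hCb.2⟩ h1.2
  · rw [List.prefix_iff_eq_append.mp h2.1]
    exact mk_mem_ESet ha ⟨hLS.inter_mem _ hBa.1 _ (hLS.relRange_mem _ hCb.1 _
      (drop_mem_LStar ha _)), Set.inter_subset_left.trans hBa.2⟩ h2.2
  · exact zero_mem_ESet

theorem tmul_mk_eq_left_trans {w a b : List A} {S B C : Set V} (hS : S.Nonempty)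
    (hB : B.Nonempty) (h1 : Λ.tmul (Tr.mk w S w) (Tr.mk a B a) = Tr.mk w S w)
    (h2 : Λ.tmul (Tr.mk a B a) (Tr.mk b C b) = Tr.mk a B a) :
    Λ.tmul (Tr.mk w S w) (Tr.mk b C b) = Tr.mk w S w := by
  rw [tmul_mk_eq_left_iff hS] at h1 ⊢
  rw [tmul_mk_eq_left_iff hB] at h2
  obtain ⟨⟨a', rfl⟩, hSB⟩ := h1
  obtain ⟨⟨b', rfl⟩, hBC⟩ := h2
  refine ⟨List.prefix_append_of_prefix (List.prefix_append _ _), ?_⟩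
  calc S ⊆ Λ.relRange B a' := by simpa using hSB
    _ ⊆ Λ.relRange (Λ.relRange C b') a' := relRange_mono (by simpa using hBC) _
    _ = Λ.relRange C ((b ++ b' ++ a').drop b.length) := by simp [relRange_relRange]

theorem tmul_mk_le_left (a b : List A) (B C : Set V) :
    Λ.tmul (Λ.tmul (Tr.mk a B a) (Tr.mk b C b)) (Tr.mk a B a) =
      Λ.tmul (Tr.mk a B a) (Tr.mk b C b) := by
  rw [tmul_mk]
  split_ifs with h1 h2
  · rw [List.prefix_iff_eq_append.mp h1.1, tmul_mk_eq_left_iff h1.2]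
    exact ⟨h1.1, Set.inter_subset_left⟩
  · rw [List.prefix_iff_eq_append.mp h2.1, tmul_mk_eq_left_iff h2.2]
    simp [relRange_nil]
  · rfl

end Idempotents

section Order

theorem tmul_comm_of_mem_ESet {p q : Tr V A} (hp : p ∈ Λ.ESet) (hq : q ∈ Λ.ESet) :
    Λ.tmul p q = Λ.tmul q p := by
  rcases hp with rfl | ⟨a, B, rfl, -⟩
  · rw [zero_tmul, tmul_zero]
  rcases hq with rfl | ⟨b, C, rfl, -⟩
  · rw [zero_tmul, tmul_zero]
  exact tmul_mk_comm a b B C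

theorem tmul_le_left {p q : Tr V A} (hp : p ∈ Λ.ESet) (hq : q ∈ Λ.ESet) :
    Λ.tmul (Λ.tmul p q) p = Λ.tmul p q := by
  rcases hp with rfl | ⟨a, B, rfl, -⟩
  · rfl
  rcases hq with rfl | ⟨b, C, rfl, -⟩
  · rw [tmul_zero, zero_tmul]
  exact tmul_mk_le_left a b B C

theorem tmul_le_right {p q : Tr V A} (hp : p ∈ Λ.ESet) (hq : q ∈ Λ.ESet) :
    Λ.tmul (Λ.tmul p q) q = Λ.tmul p q := by
  rw [tmul_comm_of_mem_ESet hp hq]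
  exact tmul_le_left hq hp

theorem tmul_eq_left_trans {p q r : Tr V A} (hp : p ∈ Λ.ESet) (hq : q ∈ Λ.ESet)
    (hr : r ∈ Λ.ESet) (h1 : Λ.tmul p q = p) (h2 : Λ.tmul q r = q) : Λ.tmul p r = p := by
  rcases hp with rfl | ⟨w, S, rfl, -, -, hS⟩
  · rfl
  rcases hq with rfl | ⟨a, B, rfl, -, -, hB⟩
  · rw [tmul_zero] at h1; cases h1
  rcases hr with rfl | ⟨b, C, rfl, -⟩
  · rw [tmul_zero] at h2; cases h2
  exact tmul_mk_eq_left_trans hS hB h1 h2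

theorem IsWLR.le_tmul_mk_of_prefix (hW : Λ.IsWLR) {w a b : List A} {S B C : Set V}
    (hw : w ∈ Λ.LStar) (hS : S.Nonempty) (hB : B ∈ Λ.𝒜) (hC : C ∈ Λ.𝒜) (hab : a <+: b)
    (h1 : Λ.tmul (Tr.mk w S w) (Tr.mk a B a) = Tr.mk w S w)
    (h2 : Λ.tmul (Tr.mk w S w) (Tr.mk b C b) = Tr.mk w S w) :
    Λ.tmul (Tr.mk w S w) (Λ.tmul (Tr.mk a B a) (Tr.mk b C b)) = Tr.mk w S w := by
  rw [tmul_mk_eq_left_iff hS] at h1 h2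
  obtain ⟨b', rfl⟩ := hab
  obtain ⟨⟨w', rfl⟩, hSC⟩ := h2
  have hb' : b' ∈ Λ.LStar := by
    simpa using take_mem_LStar (drop_mem_LStar hw a.length) b'.length
  have hw' : w' ∈ Λ.LStar := by simpa using drop_mem_LStar hw (a ++ b').length
  have hS_sub : S ⊆ Λ.relRange (Λ.relRange B b' ∩ C) w' := by
    rw [hW.relRange_inter (hW.toIsLS.relRange_mem B hB b' hb') hC hw', relRange_relRange]
    exact Set.subset_inter (by simpa using h1.2) (by simpa using hSC)
  have hne : (Λ.relRange B b' ∩ C).Nonempty := nonempty_of_relRange_nonempty (hS.mono hS_sub)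
  rw [tmul_of_prefix_left (List.prefix_append a b') (by simpa using hne),
    tmul_mk_eq_left_iff hS]
  simpa using hS_sub

theorem IsWLR.le_tmul (hW : Λ.IsWLR) {x p q : Tr V A} (hx : x ∈ Λ.ESet) (hx0 : x ≠ Tr.zero)
    (hp : p ∈ Λ.ESet) (hq : q ∈ Λ.ESet) (h1 : Λ.tmul x p = x) (h2 : Λ.tmul x q = x) :
    Λ.tmul x (Λ.tmul p q) = x := by
  rcases hx with rfl | ⟨w, S, rfl, hw, -, hS⟩
  · exact absurd rfl hx0
  rcases hp with rfl | ⟨a, B, rfl, -, hB, -⟩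
  · rw [tmul_zero] at h1; cases h1
  rcases hq with rfl | ⟨b, C, rfl, -, hC, -⟩
  · rw [tmul_zero] at h2; cases h2
  rcases List.prefix_or_prefix_of_prefix ((tmul_mk_eq_left_iff hS).mp h1).1
    ((tmul_mk_eq_left_iff hS).mp h2).1 with hab | hba
  · exact hW.le_tmul_mk_of_prefix hw hS hB.1 hC.1 hab h1 h2
  · rw [tmul_mk_comm]
    exact hW.le_tmul_mk_of_prefix hw hS hC.1 hB.1 hba h2 h1

end Order

section Filters

variable {ξ : Set (Tr V A)}

theorem IsFilterES.mem_ESet (hf : Λ.IsFilterES ξ) {t : Tr V A} (h : t ∈ ξ) : t ∈ Λ.ESet :=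
  (hf.2.1 t h).1

theorem IsFilterES.zero_notMem (hf : Λ.IsFilterES ξ) : Tr.zero ∉ ξ :=
  fun h => (hf.2.1 _ h).2 rfl

theorem IsFilterES.exists_mk (hf : Λ.IsFilterES ξ) {t : Tr V A} (h : t ∈ ξ) :
    ∃ a B, t = Tr.mk a B a := by
  rcases hf.mem_ESet h with rfl | ⟨a, B, rfl, -⟩
  · exact absurd h hf.zero_notMem
  · exact ⟨a, B, rfl⟩

theorem IsFilterES.of_mk_mem (hf : Λ.IsFilterES ξ) {w : List A} {D : Set V}
    (h : Tr.mk w D w ∈ ξ) : w ∈ Λ.LStar ∧ D ∈ Λ.Aset w ∧ D.Nonempty := by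
  obtain ⟨-, hD, hne⟩ := mk_mem_ESet_iff.mp (hf.mem_ESet h)
  exact ⟨mem_LStar_of_relRange_nonempty (hne.mono hD.2), hD, hne⟩

theorem IsFilterES.mk_mem_of_le (hf : Λ.IsFilterES ξ) {w u : List A} {C D : Set V}
    (hmem : Tr.mk w D w ∈ ξ) (hu : u <+: w) (hC : C ∈ Λ.𝒜) (hCr : C ⊆ Λ.rangeL u)
    (hsub : D ⊆ Λ.relRange C (w.drop u.length)) : Tr.mk u C u ∈ ξ := by
  obtain ⟨hw, -, hD⟩ := hf.of_mk_mem hmem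
  refine hf.2.2.2 _ hmem _ (mk_mem_ESet (mem_LStar_of_prefix hu hw) ⟨hC, hCr⟩
    (nonempty_of_relRange_nonempty (hD.mono hsub))) ?_
  rw [tmul_mk_eq_left_iff hD]
  exact ⟨hu, hsub⟩

theorem IsFilterES.mk_mem_of_subset (hf : Λ.IsFilterES ξ) {w : List A} {C D : Set V}
    (hmem : Tr.mk w D w ∈ ξ) (hC : C ∈ Λ.𝒜) (hCr : C ⊆ Λ.rangeL w) (hsub : D ⊆ C) :
    Tr.mk w C w ∈ ξ :=
  hf.mk_mem_of_le hmem (List.prefix_refl w) hC hCr (by simpa [relRange_nil] using hsub)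

theorem IsFilterES.mk_relRange_inter_mem (hf : Λ.IsFilterES ξ) {u w : List A}
    {B C : Set V} (h1 : Tr.mk u B u ∈ ξ) (h2 : Tr.mk w C w ∈ ξ) (hu : u <+: w) :
    Tr.mk w (Λ.relRange B (w.drop u.length) ∩ C) w ∈ ξ := by
  have hm := hf.2.2.1 _ h1 _ h2
  by_cases hne : (Λ.relRange B (w.drop u.length) ∩ C).Nonempty
  · rwa [tmul_of_prefix_left hu hne] at hm
  · refine absurd ?_ hf.zero_notMem
    rw [tmul_mk, if_neg (fun hc => hne hc.2), if_neg] at hm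
    · exact hm
    rintro ⟨hwu, hne'⟩
    obtain rfl := hu.eq_of_length (le_antisymm hu.length_le hwu.length_le)
    simp only [List.drop_length, relRange_nil] at hne hne'
    exact hne hne'

theorem IsFilterES.prefix_or_prefix (hf : Λ.IsFilterES ξ) {u w : List A} {B C : Set V}
    (h1 : Tr.mk u B u ∈ ξ) (h2 : Tr.mk w C w ∈ ξ) : u <+: w ∨ w <+: u := by
  have hm := hf.2.2.1 _ h1 _ h2
  by_contra! hcon
  rw [tmul_mk, if_neg (fun h => hcon.1 h.1), if_neg (fun h => hcon.2 h.1)] at hm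
  exact hf.zero_notMem hm

theorem IsFilterES.tmul_mem_iff (hf : Λ.IsFilterES ξ) {p q : Tr V A} (hp : p ∈ Λ.ESet)
    (hq : q ∈ Λ.ESet) : Λ.tmul p q ∈ ξ ↔ p ∈ ξ ∧ q ∈ ξ :=
  ⟨fun h => ⟨hf.2.2.2 _ h _ hp (tmul_le_left hp hq), hf.2.2.2 _ h _ hq (tmul_le_right hp hq)⟩,
    fun h => hf.2.2.1 _ h.1 _ h.2⟩

theorem charOf_eq_true_iff {t : Tr V A} : Λ.charOf ξ t = true ↔ t ∈ ξ := by
  unfold LblSp.charOf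
  split_ifs with h <;> simp [h]

theorem IsFilterES.isChar_charOf (hf : Λ.IsFilterES ξ) : Λ.IsChar (Λ.charOf ξ) := by
  refine ⟨?_, fun e he => ?_, ?_, fun e he f hf' => ?_⟩
  · obtain ⟨t, ht⟩ := hf.1
    exact ⟨t, charOf_eq_true_iff.mpr ht⟩
  · simp [LblSp.charOf, show e ∉ ξ from fun h => he (hf.mem_ESet h)]
  · simp [LblSp.charOf, hf.zero_notMem]
  · simp only [LblSp.charOf, hf.tmul_mem_iff he hf']
    by_cases h1 : e ∈ ξ <;> by_cases h2 : f ∈ ξ <;> simp [h1, h2]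

end Filters

theorem IsUltraES.mem_of_forall_tmul_ne_zero (hW : Λ.IsWLR) {U : Set (Tr V A)}
    (hU : Λ.IsUltraES U) {e : Tr V A} (he : e ∈ Λ.ESet)
    (hcompat : ∀ u ∈ U, Λ.tmul u e ≠ Tr.zero) : e ∈ U := by
  have hLS := hW.toIsLS
  have hUE : ∀ u ∈ U, u ∈ Λ.ESet := fun u hu => hU.1.mem_ESet hu
  set W : Set (Tr V A) :=
    {q | q ∈ Λ.ESet ∧ ∃ u ∈ U, Λ.tmul (Λ.tmul u e) q = Λ.tmul u e}
  have heW : e ∈ W := by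
    obtain ⟨u, hu⟩ := hU.1.1
    exact ⟨he, u, hu, tmul_le_right (hUE u hu) he⟩
  -- `W` is the filter generated by `U` and `e`.
  have hWf : Λ.IsFilterES W := by
    refine ⟨⟨e, heW⟩, ?_, ?_, ?_⟩
    · rintro q ⟨hq, u, hu, hle⟩
      refine ⟨hq, ?_⟩
      rintro rfl
      rw [tmul_zero] at hle
      exact hcompat u hu hle.symm
    · rintro q₁ ⟨hq₁, u₁, hu₁, h₁⟩ q₂ ⟨hq₂, u₂, hu₂, h₂⟩
      have hu := hU.1.2.2.1 _ hu₁ _ hu₂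
      set x := Λ.tmul (Λ.tmul u₁ u₂) e
      have hx : x ∈ Λ.ESet := tmul_mem_ESet hLS (hUE _ hu) he
      have hxu : Λ.tmul x (Λ.tmul u₁ u₂) = x := tmul_le_left (hUE _ hu) he
      have hxe : Λ.tmul x e = x := tmul_le_right (hUE _ hu) he
      have hx_le : ∀ v ∈ U, ∀ q ∈ Λ.ESet, Λ.tmul (Λ.tmul u₁ u₂) v = Λ.tmul u₁ u₂ →
          Λ.tmul (Λ.tmul v e) q = Λ.tmul v e → Λ.tmul x q = x := by
        intro v hv q hq huv hvq
        have hxv := tmul_eq_left_trans hx (hUE _ hu) (hUE v hv) hxu huv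
        exact tmul_eq_left_trans hx (tmul_mem_ESet hLS (hUE v hv) he) hq
          (hW.le_tmul hx (hcompat _ hu) (hUE v hv) he hxv hxe) hvq
      exact ⟨tmul_mem_ESet hLS hq₁ hq₂, _, hu, hW.le_tmul hx (hcompat _ hu) hq₁ hq₂
        (hx_le u₁ hu₁ q₁ hq₁ (tmul_le_left (hUE _ hu₁) (hUE _ hu₂)) h₁)
        (hx_le u₂ hu₂ q₂ hq₂ (tmul_le_right (hUE _ hu₁) (hUE _ hu₂)) h₂)⟩
    · rintro p ⟨hp, u, hu, hle⟩ q hq hpq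
      exact ⟨hq, u, hu, tmul_eq_left_trans (tmul_mem_ESet hLS (hUE u hu) he) hp hq hle hpq⟩
  rw [hU.2 W hWf fun u hu => ⟨hUE u hu, u, hu, tmul_le_left (hUE u hu) he⟩]
  exact heW

section Cutting

variable {ξ : Set (Tr V A)}

theorem Hcut_nil (ξ : Set (Tr V A)) : Λ.Hcut [] ξ = ξ := if_pos rfl

theorem mem_Hcut_iff (hLS : Λ.IsLS) (hf : Λ.IsFilterES ξ) (γ : List A) {δ : List A}
    {B : Set V} :
    Tr.mk δ B δ ∈ Λ.Hcut γ ξ ↔ B ∈ Λ.Aset δ ∧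
      Tr.mk (γ ++ δ) (B ∩ Λ.rangeL (γ ++ δ)) (γ ++ δ) ∈ ξ := by
  rcases eq_or_ne γ [] with rfl | hγ
  · rw [Hcut_nil, List.nil_append]
    refine ⟨fun h => ?_, fun ⟨hB, h⟩ => ?_⟩
    · obtain ⟨-, hB, -⟩ := hf.of_mk_mem h
      rwa [Set.inter_eq_left.mpr hB.2, and_iff_right hB]
    · rwa [Set.inter_eq_left.mpr hB.2] at h
  · rw [LblSp.Hcut, if_neg hγ]
    constructor
    · rintro ⟨δ₂, B₂, heq, hB₂, D, hD, hDB⟩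
      obtain ⟨rfl, rfl, -⟩ := Tr.mk.inj heq
      obtain ⟨hγδ, hDa, -⟩ := hf.of_mk_mem hD
      exact ⟨hB₂, hf.mk_mem_of_subset hD (hLS.inter_rangeL_mem hB₂.1 hγδ)
        Set.inter_subset_right (Set.subset_inter hDB hDa.2)⟩
    · rintro ⟨hBa, h⟩
      exact ⟨δ, B, rfl, hBa, _, h, Set.inter_subset_left⟩

theorem exists_mk_of_mem_Hcut (hf : Λ.IsFilterES ξ) (γ : List A) {t : Tr V A}
    (h : t ∈ Λ.Hcut γ ξ) : ∃ δ B, t = Tr.mk δ B δ := by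
  rcases eq_or_ne γ [] with rfl | hγ
  · exact hf.exists_mk (by rwa [Hcut_nil] at h)
  · rw [LblSp.Hcut, if_neg hγ] at h
    obtain ⟨δ, B, heq, -⟩ := h
    exact ⟨δ, B, heq⟩

/-- Cutting `γ` off is monotone: the lift `(γm, S ∩ r(γm))` of `(m, S) ≤ (ε, C)` lies below
the lift of `(ε, C)`. -/
theorem IsWLR.inter_rangeL_subset_relRange (hW : Λ.IsWLR) {γ m ε : List A} {S C : Set V}
    (hC : C ∈ Λ.𝒜) (hγm : γ ++ m ∈ Λ.LStar) (hε : ε <+: m)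
    (hS : S ⊆ Λ.relRange C (m.drop ε.length)) :
    S ∩ Λ.rangeL (γ ++ m) ⊆
      Λ.relRange (C ∩ Λ.rangeL (γ ++ ε)) ((γ ++ m).drop (γ ++ ε).length) := by
  obtain ⟨ε', rfl⟩ := hε
  have hγε : γ ++ ε ∈ Λ.LStar := mem_LStar_of_prefix (by simp) hγm
  have hε' : ε' ∈ Λ.LStar := by simpa using drop_mem_LStar hγm (γ ++ ε).length
  simp only [List.drop_left, ← List.append_assoc] at hS ⊢
  rw [hW.relRange_inter_rangeL hC hγε hε']
  exact Set.inter_subset_inter_left _ hS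

theorem IsFilterES.tmul_mem_Hcut_of_prefix (hLS : Λ.IsLS) (hf : Λ.IsFilterES ξ)
    {γ δ ε : List A} {B C : Set V} (hp : Tr.mk δ B δ ∈ Λ.Hcut γ ξ)
    (hq : Tr.mk ε C ε ∈ Λ.Hcut γ ξ) (hδε : δ <+: ε) :
    Λ.tmul (Tr.mk δ B δ) (Tr.mk ε C ε) ∈ Λ.Hcut γ ξ := by
  obtain ⟨hB, hP⟩ := (mem_Hcut_iff hLS hf γ).mp hp
  obtain ⟨hC, hQ⟩ := (mem_Hcut_iff hLS hf γ).mp hq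
  obtain ⟨ε', rfl⟩ := hδε
  have hR := hf.mk_relRange_inter_mem hP hQ (by simp)
  simp only [← List.append_assoc, List.drop_left] at hR
  obtain ⟨hγδε', -, hRne⟩ := hf.of_mk_mem hR
  have hε' : ε' ∈ Λ.LStar := by simpa using drop_mem_LStar hγδε' (γ ++ δ).length
  have hRZ : Λ.relRange (B ∩ Λ.rangeL (γ ++ δ)) ε' ∩ (C ∩ Λ.rangeL (γ ++ δ ++ ε')) ⊆
      (Λ.relRange B ε' ∩ C) ∩ Λ.rangeL (γ ++ δ ++ ε') :=
    fun v hv => ⟨⟨relRange_mono Set.inter_subset_left _ hv.1, hv.2.1⟩, hv.2.2⟩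
  have hZ : Λ.relRange B ε' ∩ C ∈ Λ.𝒜 :=
    hLS.inter_mem _ (hLS.relRange_mem _ hB.1 _ hε') _ hC.1
  have hZne : (Λ.relRange B ε' ∩ C).Nonempty := (hRne.mono hRZ).mono Set.inter_subset_left
  rw [tmul_of_prefix_left (List.prefix_append δ ε') (by simpa using hZne), List.drop_left]
  refine (mem_Hcut_iff hLS hf γ).mpr ⟨⟨hZ, Set.inter_subset_right.trans hC.2⟩, ?_⟩
  rw [← List.append_assoc]
  exact hf.mk_mem_of_subset hR (hLS.inter_rangeL_mem hZ hγδε') Set.inter_subset_right hRZ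

theorem IsFilterES.Hcut (hf : Λ.IsFilterES ξ) (hW : Λ.IsWLR) {γ : List A} {X₀ : Set V}
    (hX : Tr.mk γ X₀ γ ∈ ξ) : Λ.IsFilterES (Λ.Hcut γ ξ) := by
  have hLS := hW.toIsLS
  have hHm := fun {δ B} => mem_Hcut_iff (Λ := Λ) hLS hf γ (δ := δ) (B := B)
  obtain ⟨-, hX₀, -⟩ := hf.of_mk_mem hX
  refine ⟨⟨Tr.mk [] X₀ [], hHm.mpr ⟨⟨hX₀.1, by simp [rangeL_nil]⟩, ?_⟩⟩, ?_, ?_, ?_⟩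
  · rwa [List.append_nil, Set.inter_eq_left.mpr hX₀.2]
  · intro t ht
    obtain ⟨δ, B, rfl⟩ := exists_mk_of_mem_Hcut hf γ ht
    obtain ⟨hB, hP⟩ := hHm.mp ht
    exact ⟨mk_mem_ESet_iff.mpr ⟨rfl, hB, (hf.of_mk_mem hP).2.2.mono Set.inter_subset_left⟩,
      nofun⟩
  · intro p hp q hq
    obtain ⟨δ, B, rfl⟩ := exists_mk_of_mem_Hcut hf γ hp
    obtain ⟨ε, C, rfl⟩ := exists_mk_of_mem_Hcut hf γ hq
    rcases hf.prefix_or_prefix (hHm.mp hp).2 (hHm.mp hq).2 with h | h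
    · exact hf.tmul_mem_Hcut_of_prefix hLS hp hq ((List.prefix_append_right_inj γ).mp h)
    · rw [tmul_mk_comm]
      exact hf.tmul_mem_Hcut_of_prefix hLS hq hp ((List.prefix_append_right_inj γ).mp h)
  · intro p hp q hq hpq
    obtain ⟨δ, B, rfl⟩ := exists_mk_of_mem_Hcut hf γ hp
    obtain ⟨hB, hP⟩ := hHm.mp hp
    obtain ⟨hγδ, -, hPne⟩ := hf.of_mk_mem hP
    rcases hq with rfl | ⟨ε, C, rfl, -, hC, -⟩
    · rw [tmul_zero] at hpq; cases hpq
    obtain ⟨hεδ, hBC⟩ := (tmul_mk_eq_left_iff (hPne.mono Set.inter_subset_left)).mp hpq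
    have hγε := mem_LStar_of_prefix ((List.prefix_append_right_inj γ).mpr hεδ) hγδ
    exact hHm.mpr ⟨hC, hf.mk_mem_of_le hP ((List.prefix_append_right_inj γ).mpr hεδ)
      (hLS.inter_rangeL_mem hC.1 hγε) Set.inter_subset_right
      (hW.inter_rangeL_subset_relRange hC.1 hγδ hεδ hBC)⟩

theorem WPrefix_inr_iff {β : List A} {h : ℕ → A} :
    WPrefix β (Sum.inr h) ↔ ∀ (i : ℕ) (hi : i < β.length), β[i] = h i := by
  constructor
  · intro heq i hi
    have heq' : β = List.ofFn (fun i : Fin β.length => h ↑i) := heq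
    rw [List.getElem_of_eq heq' hi, List.getElem_ofFn]
  · intro hpt
    refine List.ext_getElem (by simp) fun i h₁ _ => ?_
    simpa only [List.getElem_ofFn] using hpt i h₁

theorem WPrefix_append_wappend_iff (γ δ : List A) (α' : Word A) :
    WPrefix (γ ++ δ) (wappend γ α') ↔ WPrefix δ α' := by
  rcases α' with l | f
  · exact List.prefix_append_right_inj γ
  · simp only [wappend, Sum.elim_inr, WPrefix_inr_iff]
    constructor
    · intro hL i hi
      have h2 := hL (γ.length + i) (by simp; omega)
      rw [List.getElem_append_right (by omega), dif_neg (by omega)] at h2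
      simpa using h2
    · intro hR i hi
      by_cases hig : i < γ.length
      · rw [List.getElem_append_left hig, dif_pos hig]
        simp
      · rw [List.getElem_append_right (le_of_not_gt hig), dif_neg hig]
        exact hR (i - γ.length) (by simp at hi; omega)

theorem hasWord_Hcut (hLS : Λ.IsLS) (hf : Λ.IsFilterES ξ) {γ : List A} {α' : Word A}
    (hw : Λ.HasWord ξ (wappend γ α')) : Λ.HasWord (Λ.Hcut γ ξ) α' := by
  intro δ hδ
  have hγδ : γ ++ δ ≠ [] := by simp [hδ]
  rw [← WPrefix_append_wappend_iff γ δ α', ← hw (γ ++ δ) hγδ]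
  constructor
  · rintro ⟨B, hB⟩
    exact ⟨_, ((mem_Hcut_iff hLS hf γ).mp hB).2⟩
  · rintro ⟨B, hB⟩
    obtain ⟨-, hBa, -⟩ := hf.of_mk_mem hB
    refine ⟨B, (mem_Hcut_iff hLS hf γ).mpr ⟨⟨hBa.1, hBa.2.trans (rangeL_append_subset γ δ)⟩, ?_⟩⟩
    rwa [Set.inter_eq_left.mpr hBa.2]

end Cutting

section Tightness

theorem IsFilterES.exists_mem_Hcut_lift_le (hW : Λ.IsWLR) {U : Set (Tr V A)}
    (hU : Λ.IsFilterES U) {γ : List A} (hg : Tr.mk γ (Λ.rangeL γ) γ ∈ U) {u : Tr V A}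
    (hu : u ∈ U) : ∃ δ S, Tr.mk δ S δ ∈ Λ.Hcut γ U ∧
      Λ.tmul (Tr.mk (γ ++ δ) (S ∩ Λ.rangeL (γ ++ δ)) (γ ++ δ)) u =
        Tr.mk (γ ++ δ) (S ∩ Λ.rangeL (γ ++ δ)) (γ ++ δ) := by
  have hug := hU.2.2.1 _ hu _ hg
  obtain ⟨m, S, hm⟩ := hU.exists_mk hug
  obtain ⟨-, hSm, hSne⟩ := hU.of_mk_mem (hm ▸ hug)
  have hmg : Λ.tmul (Tr.mk m S m) (Tr.mk γ (Λ.rangeL γ) γ) = Tr.mk m S m :=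
    hm ▸ tmul_le_right (hU.mem_ESet hu) (hU.mem_ESet hg)
  obtain ⟨⟨δ, rfl⟩, -⟩ := (tmul_mk_eq_left_iff hSne).mp hmg
  have hS : S ∩ Λ.rangeL (γ ++ δ) = S := Set.inter_eq_left.mpr hSm.2
  refine ⟨δ, S, (mem_Hcut_iff hW.toIsLS hU γ).mpr
    ⟨⟨hSm.1, hSm.2.trans (rangeL_append_subset _ _)⟩, by rwa [hS, ← hm]⟩, ?_⟩
  rw [hS, ← hm]
  exact tmul_le_left (hU.mem_ESet hu) (hU.mem_ESet hg)

theorem IsFilterES.exists_le_lifts (hW : Λ.IsWLR) {ζ : Set (Tr V A)} (hζ : Λ.IsFilterES ζ)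
    {γ : List A} (hγ : Tr.mk [] (Λ.rangeL γ) [] ∈ ζ) {δ ε : List A} {S C : Set V}
    (hp : Tr.mk δ S δ ∈ ζ) (hq : Tr.mk ε C ε ∈ ζ) :
    ∃ x ∈ Λ.ESet, x ≠ Tr.zero ∧
      Λ.tmul x (Tr.mk (γ ++ δ) (S ∩ Λ.rangeL (γ ++ δ)) (γ ++ δ)) = x ∧
      Λ.tmul x (Tr.mk (γ ++ ε) (C ∩ Λ.rangeL (γ ++ ε)) (γ ++ ε)) = x := by
  have hqp := hζ.2.2.1 _ hq _ hp
  obtain ⟨m, T, hm⟩ := hζ.exists_mk hqp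
  obtain ⟨-, hTm, hTne⟩ := hζ.of_mk_mem (hm ▸ hqp)
  obtain ⟨hεm, hTC⟩ := (tmul_mk_eq_left_iff hTne).mp
    (hm ▸ tmul_le_left (hζ.mem_ESet hq) (hζ.mem_ESet hp))
  obtain ⟨hδm, hTS⟩ := (tmul_mk_eq_left_iff hTne).mp
    (hm ▸ tmul_le_right (hζ.mem_ESet hq) (hζ.mem_ESet hp))
  have hγT := hζ.mk_relRange_inter_mem hγ (hm ▸ hqp) List.nil_prefix
  rw [List.length_nil, List.drop_zero, ← rangeL_append, Set.inter_comm] at hγT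
  have hne := (hζ.of_mk_mem hγT).2.2
  have hγm : γ ++ m ∈ Λ.LStar := mem_LStar_of_relRange_nonempty (hne.mono Set.inter_subset_right)
  refine ⟨_, mk_mem_ESet hγm ⟨hW.toIsLS.inter_rangeL_mem hTm.1 hγm, Set.inter_subset_right⟩ hne,
    nofun, ?_, ?_⟩ <;> rw [tmul_mk_eq_left_iff hne]
  · exact ⟨(List.prefix_append_right_inj γ).mpr hδm,
      hW.inter_rangeL_subset_relRange (hζ.of_mk_mem hp).2.1.1 hγm hδm hTS⟩
  · exact ⟨(List.prefix_append_right_inj γ).mpr hεm,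
      hW.inter_rangeL_subset_relRange (hζ.of_mk_mem hq).2.1.1 hγm hεm hTC⟩

/-- A filter `ζ ⊇ H_{[γ]}(U)` lies in `H_{[γ]}(U)`: the lift of any `q ∈ ζ` meets every
`u ∈ U`, so it lies in the ultrafilter `U`. -/
theorem IsUltraES.Hcut (hW : Λ.IsWLR) {U : Set (Tr V A)} (hU : Λ.IsUltraES U)
    {γ : List A} {D₀ : Set V} (hγU : Tr.mk γ D₀ γ ∈ U) : Λ.IsUltraES (Λ.Hcut γ U) := by
  have hLS := hW.toIsLS
  rcases eq_or_ne γ [] with rfl | hγne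
  · rwa [Hcut_nil]
  obtain ⟨hγ, hD₀, -⟩ := hU.1.of_mk_mem hγU
  have hrγ : Λ.rangeL γ ∈ Λ.𝒜 := hLS.range_mem γ hγ hγne
  have hg : Tr.mk γ (Λ.rangeL γ) γ ∈ U := hU.1.mk_mem_of_subset hγU hrγ subset_rfl hD₀.2
  refine ⟨hU.1.Hcut hW hγU, fun ζ hζ hsub => hsub.antisymm fun q hq => ?_⟩
  obtain ⟨ε, C, rfl⟩ := hζ.exists_mk hq
  obtain ⟨-, hC, -⟩ := hζ.of_mk_mem hq
  have hγζ : Tr.mk [] (Λ.rangeL γ) [] ∈ ζ :=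
    hsub ((mem_Hcut_iff hLS hU.1 γ).mpr ⟨⟨hrγ, by simp [rangeL_nil]⟩, by simpa using hg⟩)
  have hCγε := hζ.mk_relRange_inter_mem hγζ hq List.nil_prefix
  rw [List.length_nil, List.drop_zero, ← rangeL_append, Set.inter_comm] at hCγε
  have hCne := (hζ.of_mk_mem hCγε).2.2
  have hγε : γ ++ ε ∈ Λ.LStar :=
    mem_LStar_of_relRange_nonempty (hCne.mono Set.inter_subset_right)
  have hqE : Tr.mk (γ ++ ε) (C ∩ Λ.rangeL (γ ++ ε)) (γ ++ ε) ∈ Λ.ESet :=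
    mk_mem_ESet hγε ⟨hLS.inter_rangeL_mem hC.1 hγε, Set.inter_subset_right⟩ hCne
  refine (mem_Hcut_iff hLS hU.1 γ).mpr ⟨hC, hU.mem_of_forall_tmul_ne_zero hW hqE fun u hu => ?_⟩
  obtain ⟨δ, S, hp, hpu⟩ := hU.1.exists_mem_Hcut_lift_le hW hg hu
  obtain ⟨x, hx, hx0, hxp, hxq⟩ := hζ.exists_le_lifts hW hγζ (hsub hp) hq
  have hxu := tmul_eq_left_trans hx (hU.1.mem_ESet ((mem_Hcut_iff hLS hU.1 γ).mp hp).2)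
    (hU.1.mem_ESet hu) hxp hpu
  intro h0
  have := hW.le_tmul hx hx0 (hU.1.mem_ESet hu) hqE hxu hxq
  rw [h0, tmul_zero] at this
  exact hx0 this.symm

noncomputable def cutChar (γ : List A) (ψ : Tr V A → Bool) : Tr V A → Bool
  | Tr.zero => false
  | Tr.mk δ B δ' =>
      if δ' = δ ∧ B ∈ Λ.Aset δ then ψ (Tr.mk (γ ++ δ) (B ∩ Λ.rangeL (γ ++ δ)) (γ ++ δ))
      else false

theorem continuous_cutChar (γ : List A) : Continuous (Λ.cutChar γ) := by
  refine continuous_pi fun t => ?_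
  rcases t with _ | ⟨δ, B, δ'⟩
  · exact continuous_const
  · simp only [cutChar]
    split_ifs
    · exact continuous_apply _
    · exact continuous_const

theorem cutChar_charOf (hLS : Λ.IsLS) (γ : List A) {ξ : Set (Tr V A)}
    (hf : Λ.IsFilterES ξ) : Λ.cutChar γ (Λ.charOf ξ) = Λ.charOf (Λ.Hcut γ ξ) := by
  funext t
  rcases t with _ | ⟨δ, B, δ'⟩
  · have hz : Tr.zero ∉ Λ.Hcut γ ξ := fun h => by
      obtain ⟨δ, B, h⟩ := exists_mk_of_mem_Hcut hf γ h
      cases h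
    simp [cutChar, LblSp.charOf, hz]
  · simp only [cutChar]
    by_cases hc : δ' = δ ∧ B ∈ Λ.Aset δ
    · obtain ⟨rfl, hB⟩ := hc
      rw [if_pos ⟨rfl, hB⟩]
      simp only [LblSp.charOf, mem_Hcut_iff hLS hf γ, hB, true_and]
    · rw [if_neg hc]
      have h2 : Tr.mk δ B δ' ∉ Λ.Hcut γ ξ := fun h => by
        obtain ⟨δ₂, B₂, heq⟩ := exists_mk_of_mem_Hcut hf γ h
        obtain ⟨rfl, rfl, rfl⟩ := Tr.mk.inj heq
        exact hc ⟨rfl, ((mem_Hcut_iff hLS hf γ).mp h).1⟩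
      simp [LblSp.charOf, h2]

/-- Cutting is continuous on characters and maps the ultrafilters in the neighbourhood
`{ψ | ψ (γ, X₀, γ) = 1}` of `ξ` to ultrafilters, so it maps `ξ` into the closure of the
ultrafilter characters. -/
theorem IsTightFilter.charOf_Hcut_mem_tightSpectrum (hW : Λ.IsWLR) {ξ : Set (Tr V A)}
    (hξ : Λ.IsTightFilter ξ) {γ : List A} {X₀ : Set V} (hX : Tr.mk γ X₀ γ ∈ ξ) :
    Λ.charOf (Λ.Hcut γ ξ) ∈ Λ.tightSpectrum := by
  refine ⟨(hξ.1.Hcut hW hX).isChar_charOf, ?_⟩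
  set O : Set (Tr V A → Bool) := {ψ | ψ (Tr.mk γ X₀ γ) = true}
  have hO : IsOpen O :=
    (isOpen_discrete ({true} : Set Bool)).preimage
      (continuous_apply (A := fun _ : Tr V A => Bool) (Tr.mk γ X₀ γ))
  have hξO : Λ.charOf ξ ∈ closure (O ∩ {ψ | ∃ U, Λ.IsUltraES U ∧ ψ = Λ.charOf U}) :=
    hO.inter_closure ⟨charOf_eq_true_iff.mpr hX, hξ.2.2⟩
  have h := mem_closure_image (Λ.continuous_cutChar γ).continuousAt hξO
  rw [cutChar_charOf hW.toIsLS γ hξ.1] at h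
  refine closure_mono ?_ h
  rintro _ ⟨_, ⟨hψO, U, hU, rfl⟩, rfl⟩
  exact ⟨Λ.Hcut γ U, hU.Hcut hW (charOf_eq_true_iff.mp hψO), cutChar_charOf hW.toIsLS γ hU.1⟩

end Tightness

section Gluing

variable {ξ : Set (Tr V A)}

theorem tmul_mk_append_mk {a b c ε : List A} {X Y : Set V} (hY : Y.Nonempty)
    (hYX : Y ⊆ Λ.relRange X ε) :
    Λ.tmul (Tr.mk a Y (b ++ ε)) (Tr.mk b X c) = Tr.mk a Y (c ++ ε) := by
  rw [tmul_mk]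
  split_ifs with h₁ h₂
  · obtain rfl : ε = [] := by simpa using h₁.1.length_le
    simp only [List.append_nil, List.drop_length, relRange_nil] at hYX ⊢
    rw [Set.inter_eq_left.mpr hYX]
  · rw [List.drop_left, Set.inter_eq_left.mpr hYX]
  · rw [List.drop_left, Set.inter_eq_left.mpr hYX] at h₂
    exact absurd ⟨List.prefix_append b ε, hY⟩ h₂

theorem tmul_mk_mk_of_subset {a b c : List A} {X Y : Set V} (hY : Y.Nonempty) (hYX : Y ⊆ X) :
    Λ.tmul (Tr.mk a Y b) (Tr.mk b X c) = Tr.mk a Y c := by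
  simpa using tmul_mk_append_mk (Λ := Λ) (a := a) (b := b) (c := c) (ε := []) hY
    (by rwa [relRange_nil])

theorem IsFilterES.tmul_tmul_mem_iff (hf : Λ.IsFilterES ξ) {β γ δ : List A} {X B : Set V} :
    Λ.tmul (Λ.tmul (Tr.mk γ X β) (Tr.mk δ B δ)) (Tr.mk β X γ) ∈ ξ ↔
      (∃ ε, ε ≠ [] ∧ δ = β ++ ε ∧ Tr.mk (γ ++ ε) (Λ.relRange X ε ∩ B) (γ ++ ε) ∈ ξ) ∨
      (∃ ε, β = δ ++ ε ∧ Tr.mk γ (X ∩ Λ.relRange B ε) γ ∈ ξ) := by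
  rw [tmul_mk γ δ β δ X B]
  split_ifs with h₁ h₂
  · obtain ⟨ε, rfl⟩ := h₁.1
    simp only [List.drop_left] at h₁ ⊢
    rw [tmul_mk_append_mk h₁.2 Set.inter_subset_left]
    rcases eq_or_ne ε [] with rfl | hε
    · refine ⟨fun h => Or.inr ⟨[], by simp, by simpa [relRange_nil] using h⟩, ?_⟩
      rintro (⟨ε, hε, h, -⟩ | ⟨ε, h, hm⟩)
      · exact absurd (by simpa using h) hε
      · obtain rfl : ε = [] := by simpa using h
        simpa [relRange_nil] using hm
    · refine ⟨fun h => Or.inl ⟨ε, hε, rfl, h⟩, ?_⟩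
      rintro (⟨ε', -, h, hm⟩ | ⟨ε', h, -⟩)
      · rwa [List.append_cancel_left h]
      · exact absurd (by simp at h; exact h.1) hε
  · obtain ⟨ε, rfl⟩ := h₂.1
    simp only [List.drop_left] at h₂ ⊢
    rw [tmul_mk_mk_of_subset h₂.2 Set.inter_subset_left]
    refine ⟨fun h => Or.inr ⟨ε, rfl, h⟩, ?_⟩
    rintro (⟨ε', hε', h, -⟩ | ⟨ε', h, hm⟩)
    · exact absurd (by simp at h; exact h.2) hε'
    · rwa [List.append_cancel_left h]
  · rw [zero_tmul]
    refine iff_of_false hf.zero_notMem ?_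
    rintro (⟨ε, -, rfl, hm⟩ | ⟨ε, rfl, hm⟩)
    · exact h₁ ⟨List.prefix_append _ _, by simpa using (hf.of_mk_mem hm).2.2⟩
    · exact h₂ ⟨List.prefix_append _ _, by simpa using (hf.of_mk_mem hm).2.2⟩

theorem IsFilterES.theta_charOf_mk_eq_true_iff (hf : Λ.IsFilterES ξ) {β γ δ : List A}
    {X B : Set V} :
    Λ.theta (Tr.mk β X γ) (Λ.charOf ξ) (Tr.mk δ B δ) = true ↔ B ∈ Λ.Aset δ ∧
      ((∃ ε, ε ≠ [] ∧ δ = β ++ ε ∧ Tr.mk (γ ++ ε) (Λ.relRange X ε ∩ B) (γ ++ ε) ∈ ξ) ∨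
       (∃ ε, β = δ ++ ε ∧ Tr.mk γ (X ∩ Λ.relRange B ε) γ ∈ ξ)) := by
  simp only [LblSp.theta, Tr.tstar]
  by_cases hE : Tr.mk δ B δ ∈ Λ.ESet
  · rw [if_pos hE, charOf_eq_true_iff, hf.tmul_tmul_mem_iff,
      and_iff_right (mk_mem_ESet_iff.mp hE).2.1]
  · rw [if_neg hE]
    refine iff_of_false Bool.false_ne_true fun ⟨hB, h⟩ => hE (mk_mem_ESet_iff.mpr ⟨rfl, hB, ?_⟩)
    rcases h with ⟨ε, -, -, hm⟩ | ⟨ε, -, hm⟩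
    · exact (hf.of_mk_mem hm).2.2.mono Set.inter_subset_right
    · exact nonempty_of_relRange_nonempty ((hf.of_mk_mem hm).2.2.mono Set.inter_subset_right)

theorem IsFilterES.exists_mk_of_theta_charOf_eq_true (hf : Λ.IsFilterES ξ) {s e : Tr V A}
    (h : Λ.theta s (Λ.charOf ξ) e = true) : ∃ δ B, e = Tr.mk δ B δ := by
  unfold LblSp.theta at h
  split_ifs at h with hE
  rcases hE with rfl | ⟨δ, B, rfl, -⟩
  · rw [tmul_zero, zero_tmul, charOf_eq_true_iff] at h
    exact absurd h hf.zero_notMem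
  · exact ⟨δ, B, rfl⟩

theorem exists_mk_of_mem_Gglue {ζ : Set (Tr V A)} (hζ : Λ.IsFilterES ζ) {β : List A}
    {e : Tr V A} (h : e ∈ Λ.Gglue β ζ) : ∃ δ B, e = Tr.mk δ B δ := by
  unfold LblSp.Gglue at h
  split_ifs at h
  · exact hζ.exists_mk h
  all_goals obtain ⟨δ, B, rfl, -⟩ := h; exact ⟨δ, B, rfl⟩

theorem mk_mem_Gglue_iff_of_exists {ζ : Set (Tr V A)} {β δ : List A} {B : Set V}
    (hβ : β ≠ []) (hζ : ∃ (δ : List A) (B : Set V), δ ≠ [] ∧ Tr.mk δ B δ ∈ ζ) :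
    Tr.mk δ B δ ∈ Λ.Gglue β ζ ↔
      (∃ ε, ε ≠ [] ∧ δ = β ++ ε ∧ ∃ C, Tr.mk ε C ε ∈ ζ ∧ B = C ∩ Λ.rangeL δ) ∨
      (∃ ε, β = δ ++ ε ∧ B ∈ Λ.Aset δ ∧ ∃ (b : A) (C : Set V), Tr.mk [b] C [b] ∈ ζ ∧
        Λ.relRange B (ε ++ [b]) = C ∩ Λ.rangeL (β ++ [b])) := by
  rw [LblSp.Gglue, if_neg hβ, if_pos hζ]
  constructor
  · rintro ⟨δ', B', heq, ⟨⟨ε, rfl⟩, hne, C, hC, hB⟩ | ⟨⟨ε, rfl⟩, hB, b, C, hC, hbC⟩⟩ <;>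
      obtain ⟨rfl, rfl, -⟩ := Tr.mk.inj heq
    · exact Or.inl ⟨ε, by rintro rfl; simp at hne, rfl, C, by simpa using hC, hB⟩
    · exact Or.inr ⟨ε, rfl, hB, b, C, hC, by simpa using hbC⟩
  · rintro (⟨ε, hε, rfl, C, hC, hB⟩ | ⟨ε, rfl, hB, b, C, hC, hbC⟩)
    · exact ⟨_, _, rfl, Or.inl ⟨List.prefix_append _ _, by simpa using hε.symm, C,
        by simpa using hC, hB⟩⟩
    · exact ⟨_, _, rfl, Or.inr ⟨List.prefix_append _ _, hB, b, C, hC, by simpa using hbC⟩⟩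

theorem mk_mem_Gglue_iff_of_not_exists {ζ : Set (Tr V A)} {β δ : List A} {B : Set V}
    (hβ : β ≠ []) (hζ : ¬∃ (δ : List A) (B : Set V), δ ≠ [] ∧ Tr.mk δ B δ ∈ ζ) :
    Tr.mk δ B δ ∈ Λ.Gglue β ζ ↔ ∃ ε, β = δ ++ ε ∧ B ∈ Λ.Aset δ ∧
      ∃ C, Tr.mk [] C [] ∈ ζ ∧ Λ.relRange B ε = C ∩ Λ.rangeL β := by
  rw [LblSp.Gglue, if_neg hβ, if_neg hζ]
  constructor
  · rintro ⟨δ', B', heq, ⟨ε, rfl⟩, hB, C, hC, hCeq⟩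
    obtain ⟨rfl, rfl, -⟩ := Tr.mk.inj heq
    exact ⟨ε, rfl, hB, C, hC, by simpa using hCeq⟩
  · rintro ⟨ε, rfl, hB, C, hC, hCeq⟩
    exact ⟨δ, B, rfl, List.prefix_append _ _, hB, C, hC, by simpa using hCeq⟩

end Gluing

section Action

variable {ξ : Set (Tr V A)} {γ : List A} {X : Set V}

theorem mem_Hcut_iff_relRange (hLS : Λ.IsLS) (hf : Λ.IsFilterES ξ)
    (hγX : Tr.mk γ X γ ∈ ξ) {δ : List A} {B : Set V} :
    Tr.mk δ B δ ∈ Λ.Hcut γ ξ ↔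
      B ∈ Λ.Aset δ ∧ Tr.mk (γ ++ δ) (Λ.relRange X δ ∩ B) (γ ++ δ) ∈ ξ := by
  rw [mem_Hcut_iff hLS hf γ]
  refine and_congr_right fun hB => ?_
  have hXδ := relRange_subset_rangeL_append (hf.of_mk_mem hγX).2.1.2 δ
  constructor
  · intro h
    simpa [Set.inter_inter_eq_inter_of_subset hXδ] using
      hf.mk_relRange_inter_mem hγX h (List.prefix_append γ δ)
  · intro h
    exact hf.mk_mem_of_subset h (hLS.inter_rangeL_mem hB.1 (hf.of_mk_mem h).1)
      Set.inter_subset_right fun v hv => ⟨hv.2, hXδ hv.1⟩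

theorem IsFilterES.exists_letter_mem (hLS : Λ.IsLS) {ζ : Set (Tr V A)} (hζ : Λ.IsFilterES ζ)
    (h : ∃ (δ : List A) (B : Set V), δ ≠ [] ∧ Tr.mk δ B δ ∈ ζ) :
    ∃ (b : A) (C : Set V), Tr.mk [b] C [b] ∈ ζ := by
  obtain ⟨δ, B, hδ, hm⟩ := h
  obtain ⟨b, δ', rfl⟩ := List.exists_cons_of_ne_nil hδ
  obtain ⟨hbδ, hB, -⟩ := hζ.of_mk_mem hm
  refine ⟨b, _, hζ.mk_mem_of_le hm (List.prefix_cons_inj b |>.mpr (List.nil_prefix))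
    (hLS.range_mem [b] (mem_LStar_of_prefix (by simp) hbδ) (by simp)) subset_rfl ?_⟩
  simpa [← rangeL_append] using hB.2

theorem exists_mem_Hcut_inter_rangeL_iff (hΛ : Λ.IsNormal) (hf : Λ.IsFilterES ξ)
    (hγX : Tr.mk γ X γ ∈ ξ) {β ε : List A} (hXβ : X ⊆ Λ.rangeL β) (hε : ε ≠ []) {B : Set V} :
    (∃ C, Tr.mk ε C ε ∈ Λ.Hcut γ ξ ∧ B = C ∩ Λ.rangeL (β ++ ε)) ↔
      B ∈ Λ.Aset (β ++ ε) ∧ Tr.mk (γ ++ ε) (Λ.relRange X ε ∩ B) (γ ++ ε) ∈ ξ := by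
  have hLS := hΛ.toIsWLR.toIsLS
  have hXε := relRange_subset_rangeL_append hXβ ε
  simp_rw [mem_Hcut_iff_relRange hLS hf hγX]
  constructor
  · rintro ⟨C, ⟨hC, hm⟩, rfl⟩
    rw [Set.inter_inter_eq_inter_of_subset hXε]
    refine ⟨⟨hLS.inter_rangeL_mem hC.1 ?_, Set.inter_subset_right⟩, hm⟩
    exact mem_LStar_of_relRange_nonempty
      (((hf.of_mk_mem hm).2.2.mono Set.inter_subset_left).mono hXε)
  · rintro ⟨hB, hm⟩
    obtain ⟨hγε, -, hne⟩ := hf.of_mk_mem hm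
    have hβε : β ++ ε ∈ Λ.LStar :=
      mem_LStar_of_relRange_nonempty ((hne.mono Set.inter_subset_right).mono hB.2)
    obtain ⟨C, hC, hCε, hCB⟩ := hΛ.exists_inter_eq hB.1
      (hLS.range_mem _ hβε (by simp [hε])) (hLS.range_mem _ (mem_LStar_of_append_mem hγε) hε)
      hB.2 (rangeL_append_subset β ε)
    refine ⟨C, ⟨⟨hC, hCε⟩, ?_⟩, hCB.symm⟩
    rwa [← Set.inter_inter_eq_inter_of_subset hXε, hCB]

theorem mk_mem_of_letter_mem_Hcut (hW : Λ.IsWLR) (hf : Λ.IsFilterES ξ)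
    (hγX : Tr.mk γ X γ ∈ ξ) {δ ε : List A} (hXβ : X ⊆ Λ.rangeL (δ ++ ε)) {B : Set V}
    (hB : B ∈ Λ.Aset δ) {b : A} {C : Set V} (hC : Tr.mk [b] C [b] ∈ Λ.Hcut γ ξ)
    (hCB : Λ.relRange B (ε ++ [b]) = C ∩ Λ.rangeL (δ ++ ε ++ [b])) :
    Tr.mk γ (X ∩ Λ.relRange B ε) γ ∈ ξ := by
  have hLS := hW.toIsLS
  obtain ⟨-, hX, hXne⟩ := hf.of_mk_mem hγX
  have hε : ε ∈ Λ.LStar :=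
    mem_LStar_of_append_mem (mem_LStar_of_relRange_nonempty (hXne.mono hXβ))
  have hBε : Λ.relRange B ε ∈ Λ.𝒜 := hLS.relRange_mem _ hB.1 _ hε
  obtain ⟨-, hm⟩ := (mem_Hcut_iff_relRange hLS hf hγX).mp hC
  have hb : [b] ∈ Λ.LStar := mem_LStar_of_append_mem (hf.of_mk_mem hm).1
  -- weak left-resolvingness: `r(X, b) ∩ r(r(B, ε), b) = r(X ∩ r(B, ε), b)`
  rw [← Set.inter_inter_eq_inter_of_subset (relRange_subset_rangeL_append hXβ [b]), ← hCB,
    ← relRange_relRange, ← hW.relRange_inter hX.1 hBε hb] at hm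
  exact hf.mk_mem_of_le hm (List.prefix_append γ [b]) (hLS.inter_mem _ hX.1 _ hBε)
    (Set.inter_subset_left.trans hX.2) (by rw [List.drop_left])

theorem exists_letter_mem_Hcut_of_mk_mem (hΛ : Λ.IsNormal) (hf : Λ.IsFilterES ξ)
    (hγX : Tr.mk γ X γ ∈ ξ) {δ ε : List A} {B : Set V} (hB : B ∈ Λ.Aset δ) {b : A}
    {C₀ : Set V} (hC₀ : Tr.mk [b] C₀ [b] ∈ Λ.Hcut γ ξ)
    (hm : Tr.mk γ (X ∩ Λ.relRange B ε) γ ∈ ξ) :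
    ∃ C, Tr.mk [b] C [b] ∈ Λ.Hcut γ ξ ∧
      Λ.relRange B (ε ++ [b]) = C ∩ Λ.rangeL (δ ++ ε ++ [b]) := by
  have hLS := hΛ.toIsWLR.toIsLS
  obtain ⟨-, hX, -⟩ := hf.of_mk_mem hγX
  have hP := hf.mk_relRange_inter_mem hm ((mem_Hcut_iff_relRange hLS hf hγX).mp hC₀).2
    (List.prefix_append γ [b])
  rw [List.drop_left] at hP
  obtain ⟨hγb, -, hPne⟩ := hf.of_mk_mem hP
  have hPR : Λ.relRange (X ∩ Λ.relRange B ε) [b] ⊆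
      Λ.relRange X [b] ∩ Λ.relRange B (ε ++ [b]) := fun v hv =>
    ⟨relRange_mono Set.inter_subset_left _ hv,
      relRange_relRange B ε [b] ▸ relRange_mono Set.inter_subset_right _ hv⟩
  have hRne : (Λ.relRange B (ε ++ [b])).Nonempty :=
    ((hPne.mono Set.inter_subset_left).mono hPR).mono Set.inter_subset_right
  have hRβ : Λ.relRange B (ε ++ [b]) ⊆ Λ.rangeL (δ ++ ε ++ [b]) := by
    rw [List.append_assoc]
    exact relRange_subset_rangeL_append hB.2 _
  obtain ⟨C, hC, hCb, hCR⟩ := hΛ.exists_inter_eq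
    (hLS.relRange_mem _ hB.1 _ (mem_LStar_of_relRange_nonempty hRne))
    (hLS.range_mem _ (mem_LStar_of_relRange_nonempty (hRne.mono hRβ)) (by simp))
    (hLS.range_mem _ (mem_LStar_of_append_mem hγb) (by simp)) hRβ (rangeL_append_subset _ [b])
  have hRC : Λ.relRange B (ε ++ [b]) ⊆ C := hCR ▸ Set.inter_subset_left
  refine ⟨C, (mem_Hcut_iff_relRange hLS hf hγX).mpr ⟨⟨hC, hCb⟩, ?_⟩, hCR.symm⟩
  refine hf.mk_mem_of_subset hP ?_ ?_ fun v hv => ⟨(hPR hv.1).1, hRC (hPR hv.1).2⟩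
  · exact hLS.inter_mem _ (hLS.relRange_mem _ hX.1 _ (mem_LStar_of_append_mem hγb)) _ hC
  · exact Set.inter_subset_left.trans (relRange_subset_rangeL_append hX.2 [b])

theorem exists_mem_Hcut_nil_iff (hLS : Λ.IsLS) (hf : Λ.IsFilterES ξ)
    (hγX : Tr.mk γ X γ ∈ ξ) {δ ε : List A} (hXβ : X ⊆ Λ.rangeL (δ ++ ε)) {B : Set V}
    (hB : B ∈ Λ.Aset δ) :
    (∃ C, Tr.mk [] C [] ∈ Λ.Hcut γ ξ ∧ Λ.relRange B ε = C ∩ Λ.rangeL (δ ++ ε)) ↔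
      Tr.mk γ (X ∩ Λ.relRange B ε) γ ∈ ξ := by
  simp_rw [mem_Hcut_iff_relRange hLS hf hγX, List.append_nil, relRange_nil]
  constructor
  · rintro ⟨C, ⟨-, hm⟩, hCeq⟩
    rwa [hCeq, Set.inter_inter_eq_inter_of_subset hXβ]
  · intro hm
    have hε : ε ∈ Λ.LStar := mem_LStar_of_relRange_nonempty
      ((hf.of_mk_mem hm).2.2.mono Set.inter_subset_right)
    refine ⟨_, ⟨⟨hLS.relRange_mem _ hB.1 _ hε, by simp [rangeL_nil]⟩, hm⟩, ?_⟩
    exact (Set.inter_eq_left.mpr (relRange_subset_rangeL_append hB.2 ε)).symm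

theorem theta_charOf_mk_eq_true_iff_of_nil (hLS : Λ.IsLS) (hf : Λ.IsFilterES ξ)
    (hγX : Tr.mk γ X γ ∈ ξ) {δ : List A} {B : Set V} :
    Λ.theta (Tr.mk [] X γ) (Λ.charOf ξ) (Tr.mk δ B δ) = true ↔
      Tr.mk δ B δ ∈ Λ.Hcut γ ξ := by
  rw [hf.theta_charOf_mk_eq_true_iff, mem_Hcut_iff_relRange hLS hf hγX]
  refine and_congr_right fun _ => ⟨?_, fun hm => ?_⟩
  · rintro (⟨ε, -, rfl, hm⟩ | ⟨ε, h, hm⟩)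
    · exact hm
    · obtain ⟨rfl, rfl⟩ := List.append_eq_nil_iff.mp h.symm
      simpa [relRange_nil] using hm
  · rcases eq_or_ne δ [] with rfl | hδ
    · exact Or.inr ⟨[], rfl, by simpa [relRange_nil] using hm⟩
    · exact Or.inl ⟨δ, hδ, rfl, hm⟩

theorem theta_charOf_mk_eq_true_iff_of_exists (hΛ : Λ.IsNormal) (hf : Λ.IsFilterES ξ)
    (hγX : Tr.mk γ X γ ∈ ξ) {β : List A} (hXβ : X ⊆ Λ.rangeL β) (hβ : β ≠ [])
    (hζ : ∃ (δ : List A) (B : Set V), δ ≠ [] ∧ Tr.mk δ B δ ∈ Λ.Hcut γ ξ)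
    {δ : List A} {B : Set V} :
    Λ.theta (Tr.mk β X γ) (Λ.charOf ξ) (Tr.mk δ B δ) = true ↔
      Tr.mk δ B δ ∈ Λ.Gglue β (Λ.Hcut γ ξ) := by
  rw [hf.theta_charOf_mk_eq_true_iff, mk_mem_Gglue_iff_of_exists hβ hζ]
  constructor
  · rintro ⟨hB, ⟨ε, hε, rfl, hm⟩ | ⟨ε, rfl, hm⟩⟩
    · exact Or.inl ⟨ε, hε, rfl, (exists_mem_Hcut_inter_rangeL_iff hΛ hf hγX hXβ hε).mpr ⟨hB, hm⟩⟩
    · obtain ⟨b, C₀, hC₀⟩ := (hf.Hcut hΛ.toIsWLR hγX).exists_letter_mem hΛ.toIsWLR.toIsLS hζ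
      exact Or.inr ⟨ε, rfl, hB, b, exists_letter_mem_Hcut_of_mk_mem hΛ hf hγX hB hC₀ hm⟩
  · rintro (⟨ε, hε, rfl, hC⟩ | ⟨ε, rfl, hB, b, C, hC, hCB⟩)
    · obtain ⟨hB, hm⟩ := (exists_mem_Hcut_inter_rangeL_iff hΛ hf hγX hXβ hε).mp hC
      exact ⟨hB, Or.inl ⟨ε, hε, rfl, hm⟩⟩
    · exact ⟨hB, Or.inr ⟨ε, rfl, mk_mem_of_letter_mem_Hcut hΛ.toIsWLR hf hγX hXβ hB hC hCB⟩⟩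

theorem theta_charOf_mk_eq_true_iff_of_not_exists (hLS : Λ.IsLS) (hf : Λ.IsFilterES ξ)
    (hγX : Tr.mk γ X γ ∈ ξ) {β : List A} (hXβ : X ⊆ Λ.rangeL β) (hβ : β ≠ [])
    (hζ : ¬∃ (δ : List A) (B : Set V), δ ≠ [] ∧ Tr.mk δ B δ ∈ Λ.Hcut γ ξ)
    {δ : List A} {B : Set V} :
    Λ.theta (Tr.mk β X γ) (Λ.charOf ξ) (Tr.mk δ B δ) = true ↔
      Tr.mk δ B δ ∈ Λ.Gglue β (Λ.Hcut γ ξ) := by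
  rw [hf.theta_charOf_mk_eq_true_iff, mk_mem_Gglue_iff_of_not_exists hβ hζ]
  constructor
  · rintro ⟨hB, ⟨ε, hε, rfl, hm⟩ | ⟨ε, rfl, hm⟩⟩
    · obtain ⟨-, hA, -⟩ := hf.of_mk_mem hm
      refine absurd ⟨ε, _, hε, (mem_Hcut_iff hLS hf γ).mpr
        ⟨⟨hA.1, hA.2.trans (rangeL_append_subset γ ε)⟩, ?_⟩⟩ hζ
      rwa [Set.inter_eq_left.mpr hA.2]
    · exact ⟨ε, rfl, hB, (exists_mem_Hcut_nil_iff hLS hf hγX hXβ hB).mpr hm⟩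
  · rintro ⟨ε, rfl, hB, hC⟩
    exact ⟨hB, Or.inr ⟨ε, rfl, (exists_mem_Hcut_nil_iff hLS hf hγX hXβ hB).mp hC⟩⟩

theorem theta_charOf_eq_true_iff_mem_Gglue (hΛ : Λ.IsNormal) (hf : Λ.IsFilterES ξ)
    (hγX : Tr.mk γ X γ ∈ ξ) {β : List A} (hXβ : X ⊆ Λ.rangeL β) (e : Tr V A) :
    Λ.theta (Tr.mk β X γ) (Λ.charOf ξ) e = true ↔ e ∈ Λ.Gglue β (Λ.Hcut γ ξ) := by
  have hLS := hΛ.toIsWLR.toIsLS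
  by_cases he : ∃ δ B, e = Tr.mk δ B δ
  · obtain ⟨δ, B, rfl⟩ := he
    rcases eq_or_ne β [] with rfl | hβ
    · rw [LblSp.Gglue, if_pos rfl]
      exact theta_charOf_mk_eq_true_iff_of_nil hLS hf hγX
    by_cases hζ : ∃ (δ : List A) (B : Set V), δ ≠ [] ∧ Tr.mk δ B δ ∈ Λ.Hcut γ ξ
    · exact theta_charOf_mk_eq_true_iff_of_exists hΛ hf hγX hXβ hβ hζ
    · exact theta_charOf_mk_eq_true_iff_of_not_exists hLS hf hγX hXβ hβ hζ
  · exact iff_of_false (fun h => he (hf.exists_mk_of_theta_charOf_eq_true h))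
      (fun h => he (exists_mk_of_mem_Gglue (hf.Hcut hΛ.toIsWLR hγX) h))

theorem IsTightFilter.Hcut_mem_TGlueDom (hW : Λ.IsWLR) (hξ : Λ.IsTightFilter ξ)
    (hγX : Tr.mk γ X γ ∈ ξ) {α' : Word A} (hw : Λ.HasWord ξ (wappend γ α')) {β : List A}
    (hβ : β ∈ Λ.LStar) (hXβ : X ⊆ Λ.rangeL β) : Λ.Hcut γ ξ ∈ Λ.TGlueDom β α' := by
  refine ⟨⟨hξ.1.Hcut hW hγX, hξ.charOf_Hcut_mem_tightSpectrum hW hγX⟩,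
    hasWord_Hcut hW.toIsLS hξ.1 hw, fun hβne => ?_⟩
  refine (mem_Hcut_iff_relRange hW.toIsLS hξ.1 hγX).mpr
    ⟨⟨hW.toIsLS.range_mem β hβ hβne, by simp [rangeL_nil]⟩, ?_⟩
  simpa [relRange_nil, Set.inter_eq_left.mpr hXβ] using hγX

end Action

theorem statement_9_general (hΛ : Λ.IsNormal) (β γ : List A) (X : Set V) (φ : Tr V A → Bool)
    (hΩ : (Tr.mk β X γ, φ) ∈ Λ.Omega) (ξ : Set (Tr V A)) (hξ : ξ = {e | φ e = true})
    (hξt : Λ.IsTightFilter ξ) (α' : Word A)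
    (hw : Λ.HasWord ξ (wappend γ α')) :
    Λ.Hcut γ ξ ∈ Λ.TGlueDom β α' ∧
    ∀ e : Tr V A, Λ.theta (Tr.mk β X γ) φ e = true ↔ e ∈ Λ.Gglue β (Λ.Hcut γ ξ) := by
  obtain ⟨hs, -, hφ⟩ := hΩ
  have hφξ : φ = Λ.charOf ξ := by
    funext e
    rw [hξ, LblSp.charOf]
    cases h : φ e <;> simp [h]
  subst hφξ
  rcases hs with h | ⟨_, _, _, h, hβ, -, hXβ, -, hX⟩
  · cases h
  obtain ⟨rfl, rfl, rfl⟩ := Tr.mk.inj h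
  have hγX : Tr.mk γ X γ ∈ ξ := by
    rwa [Tr.tstar, tmul_mk_mk_of_subset hX subset_rfl, charOf_eq_true_iff] at hφ
  exact ⟨hξt.Hcut_mem_TGlueDom hΛ.toIsWLR hγX hw hβ hXβ.2,
    theta_charOf_eq_true_iff_mem_Gglue hΛ hξt.1 hγX hXβ.2⟩

/-- Let `(t, φ) ∈ Ω` with `t = (β, X, γ)`, and let `ξ^α` be the tight
filter associated with `φ`, with `α = γα'`. Then `H_{[γ]α'}(ξ^α)` lies in the domain
`T^{(β)α'}` of `G_{(β)α'}` (so `η = (G_{(β)α'} ∘ H_{[γ]α'})(ξ^α)` is well defined), and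
`η` is the filter of the character `θ_t(φ)`: for all `e ∈ E(S)`, `θ_t(φ)(e) = 1 ↔ e ∈ η`. -/
theorem statement_9 (hΛ : Λ.IsNormal) (β γ : List A) (X : Set V) (φ : Tr V A → Bool)
    (hΩ : (Tr.mk β X γ, φ) ∈ Λ.Omega) (ξ : Set (Tr V A)) (hξ : ξ = {e | φ e = true})
    (hξt : Λ.IsTightFilter ξ) (α' : Word A) (hα' : Λ.IsWordW α')
    (hw : Λ.HasWord ξ (wappend γ α')) :
    Λ.Hcut γ ξ ∈ Λ.TGlueDom β α' ∧
    ∀ e : Tr V A, Λ.theta (Tr.mk β X γ) φ e = true ↔ e ∈ Λ.Gglue β (Λ.Hcut γ ξ) :=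
  statement_9_general hΛ β γ X φ hΩ ξ hξ hξt α' hw

end LblSp
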